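/- arXiv:1803.00535 — 13 statements merged into one kernel-verified Lean document; each statement's English description precedes it below -/
import Mathlib

section
/- If the characteristic element w of c is nonzero, then I₀ = φ(V₀) is an index-two subgroup of I; equivalently, dim_{𝔽₂} I₀ = dim_{𝔽₂} I − 1. -/
/-- If the characteristic element w of c is nonzero, then
I₀ = φ(V₀) is an index-two subgroup of I = range φ; equivalently
dim I₀ = dim I − 1. Here V₀ = {x : B(x, c x) = 0} = ker (B.flip w). -/
theorem stmt_2
    (V : Type*) [AddCommGroup V] [Module (ZMod 2) V] [FiniteDimensional (ZMod 2) V]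
    (B : V →ₗ[ZMod 2] V →ₗ[ZMod 2] ZMod 2)
    (hBalt : ∀ x, B x x = 0)
    (hBnd : ∀ x, (∀ y, B x y = 0) → x = 0)
    (c : V →ₗ[ZMod 2] V)
    (hc : ∀ x, c (c x) = x)
    (hBc : ∀ x y, B (c x) (c y) = B x y)
    (φ : V →ₗ[ZMod 2] V) (hφ : φ = LinearMap.id + c)
    (w : V) (hw : ∀ x, B x (c x) = B x w) (hw0 : w ≠ 0) :
    Submodule.map φ (LinearMap.ker (B.flip w)) ≤ LinearMap.range φ ∧
    Module.finrank (ZMod 2) ↥(Submodule.map φ (LinearMap.ker (B.flip w))) =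
      Module.finrank (ZMod 2) ↥(LinearMap.range φ) - 1 := by
  set f : V →ₗ[ZMod 2] ZMod 2 := B.flip w with hfdef
  have hfx : ∀ x, f x = B x w := fun x => rfl
  -- symmetry of B
  have hsymm : ∀ x y, B x y = B y x := by
    intro x y
    have h := hBalt (x + y)
    simp only [map_add, LinearMap.add_apply, hBalt x, hBalt y, zero_add, add_zero] at h
    have := eq_neg_of_add_eq_zero_left h
    rw [CharTwo.neg_eq] at this
    exact this.symm
  -- ker φ ≤ ker f
  have hker_le : LinearMap.ker φ ≤ LinearMap.ker f := by
    intro x hx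
    have hx0 : x + c x = 0 := by
      have := hx
      rw [LinearMap.mem_ker, hφ] at this
      simpa using this
    have h2 : x + x = 0 := by
      rw [← two_smul (ZMod 2) x, show (2:ZMod 2) = 0 from rfl, zero_smul]
    have hcx : c x = x := by
      have h3 := eq_neg_of_add_eq_zero_right hx0
      rw [h3]
      exact neg_eq_of_add_eq_zero_left h2
    rw [LinearMap.mem_ker, hfx, ← hw x, hcx, hBalt]
  -- f is surjective
  have hex : ∃ x, f x ≠ 0 := by
    by_contra h
    push_neg at h
    apply hw0
    apply hBnd
    intro y
    rw [hsymm, ← hfx]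
    exact h y
  have hone : ∀ a : ZMod 2, a ≠ 0 → a = 1 := by decide
  obtain ⟨x, hx⟩ := hex
  have hsurj : Function.Surjective f := by
    intro b
    refine ⟨b • x, ?_⟩
    rw [map_smul, hone _ hx, smul_eq_mul, mul_one]
  have hrange : LinearMap.range f = ⊤ := LinearMap.range_eq_top.mpr hsurj
  have hrk1 : Module.finrank (ZMod 2) ↥(LinearMap.range f) = 1 := by
    rw [hrange, finrank_top, Module.finrank_self]
  have e1 := LinearMap.finrank_range_add_finrank_ker f
  have e2 := LinearMap.finrank_range_add_finrank_ker φ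
  -- restriction of φ to ker f
  set g : ↥(LinearMap.ker f) →ₗ[ZMod 2] V := φ ∘ₗ (LinearMap.ker f).subtype with hgdef
  have hrg : LinearMap.range g = Submodule.map φ (LinearMap.ker f) := by
    rw [hgdef, LinearMap.range_comp, Submodule.range_subtype]
  have hkg : LinearMap.ker g = Submodule.comap (LinearMap.ker f).subtype (LinearMap.ker φ) := by
    rw [hgdef, LinearMap.ker_comp]
  have e3 := LinearMap.finrank_range_add_finrank_ker g
  rw [hrg, hkg] at e3
  have e4 : Module.finrank (ZMod 2)
      ↥(Submodule.comap (LinearMap.ker f).subtype (LinearMap.ker φ)) =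
      Module.finrank (ZMod 2) ↥(LinearMap.ker φ) :=
    (Submodule.comapSubtypeEquivOfLe hker_le).finrank_eq
  constructor
  · exact LinearMap.map_le_range
  · omega
end

section
/- The characteristic element w of c belongs to I₀ if dim_{𝔽₂} I is even, and belongs to I₁ if dim_{𝔽₂} I is odd. Equivalently, writing w = φ(z) for some z ∈ V, one has B(z, c z) = dim_{𝔽₂} I (mod 2). -/
/-!
The form `S x y = B (φ x) y` is symmetric because `φ` is `B`-self-adjoint, its rank is
`dim I`, and `S x x = B x (c x) = B x w = S x z` whenever `φ z = w`: so `z` is a characteristic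
element of `S`, and `B z (c z) = S z z`. For any symmetric form over `𝔽₂` with characteristic
element `z`, `S z z ≡ rank S`: restricting to a complement of the kernel reduces this to the
nondegenerate case, where in a basis it becomes `dᵀ A⁻¹ d = tr (A A⁻¹)` for the Gram matrix `A`
with diagonal `d`; over `𝔽₂` the off-diagonal terms of both sides cancel in pairs, leaving
`∑ᵢ Aᵢᵢ (A⁻¹)ᵢᵢ` on each. Finally `w ∈ I` because `I = K^⊥` and `B x w = B (φ x) x` vanishes on `K`.
-/

open Module
open LinearMap (BilinForm)

open Finset in
theorem CharTwo.sum_sum_eq_sum_diag_of_symm {ι R : Type*} [Fintype ι] [CommRing R] [CharP R 2]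
    (f : ι → ι → R) (hf : ∀ i j, f i j = f j i) : ∑ i, ∑ j, f i j = ∑ i, f i i := by
  classical
  have hoff : ∑ p ∈ (univ : Finset ι).offDiag, f p.1 p.2 = 0 :=
    sum_involution (fun p _ ↦ p.swap)
      (fun p _ ↦ by rw [Prod.fst_swap, Prod.snd_swap, hf p.2, CharTwo.add_self_eq_zero])
      (fun p hp _ h ↦ (mem_offDiag.1 hp).2.2 (congrArg Prod.snd h))
      (fun p hp ↦ by simpa [and_comm, eq_comm] using hp) (fun p _ ↦ p.swap_swap)
  rw [← sum_product' univ univ f, ← diag_union_offDiag, sum_union (disjoint_diag_offDiag _),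
    sum_diag, hoff, add_zero]

theorem CharTwo.trace_mul_eq_sum_diag_mul_diag {ι R : Type*} [Fintype ι] [CommRing R] [CharP R 2]
    {A B : Matrix ι ι R} (hA : A.IsSymm) (hB : B.IsSymm) :
    (A * B).trace = ∑ i, A i i * B i i :=
  CharTwo.sum_sum_eq_sum_diag_of_symm _ fun i j ↦ by
    dsimp only
    rw [hA.apply i j, hB.apply j i]

namespace Matrix.IsSymm

variable {ι : Type*} [Fintype ι]

theorem dotProduct_mulVec_self_eq_diag_dotProduct {M : Matrix ι ι (ZMod 2)} (hM : M.IsSymm)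
    (v : ι → ZMod 2) : v ⬝ᵥ M *ᵥ v = M.diag ⬝ᵥ v := by
  have hidem : ∀ a : ZMod 2, a * a = a := by decide
  simp only [dotProduct, mulVec, Finset.mul_sum]
  rw [CharTwo.sum_sum_eq_sum_diag_of_symm]
  · simp only [diag_apply]
    refine Finset.sum_congr rfl fun i _ ↦ ?_
    rw [mul_left_comm, hidem, mul_comm]
  · intro i j
    rw [hM.apply i j]
    ring

theorem diag_dotProduct_eq_card [DecidableEq ι] {A : Matrix ι ι (ZMod 2)} (hA : A.IsSymm)
    (hdet : IsUnit A.det) {v : ι → ZMod 2} (hv : A *ᵥ v = A.diag) :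
    A.diag ⬝ᵥ v = Fintype.card ι := by
  have hv' : v = A⁻¹ *ᵥ A.diag := by rw [← hv, mulVec_mulVec, nonsing_inv_mul _ hdet, one_mulVec]
  calc A.diag ⬝ᵥ v = A⁻¹.diag ⬝ᵥ A.diag := by
        rw [hv', hA.inv.dotProduct_mulVec_self_eq_diag_dotProduct]
    _ = (A * A⁻¹).trace := by
        rw [CharTwo.trace_mul_eq_sum_diag_mul_diag hA hA.inv, dotProduct]
        simp only [diag_apply, mul_comm]
    _ = Fintype.card ι := by rw [mul_nonsing_inv _ hdet, trace_one]

end Matrix.IsSymm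

namespace LinearMap.BilinForm

def IsCharacteristic {R M : Type*} [CommSemiring R] [AddCommMonoid M] [Module R M]
    (S : BilinForm R M) (z : M) : Prop :=
  ∀ x, S x x = S x z

theorem nondegenerate_restrict_of_isCompl_ker {R M : Type*} [CommRing R] [AddCommGroup M]
    [Module R M] {S : BilinForm R M} (hS : S.IsRefl) {W : Submodule R M}
    (hW : IsCompl W (LinearMap.ker S)) : (S.restrict W).Nondegenerate := by
  refine S.nondegenerate_restrict_of_disjoint_orthogonal hS (Submodule.disjoint_def.2 ?_)
  intro x hxW hx
  refine Submodule.disjoint_def.1 hW.disjoint x hxW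
    (LinearMap.mem_ker.2 (LinearMap.ext fun v ↦ ?_))
  obtain ⟨w, hw, k, hk, rfl⟩ := Submodule.mem_sup.1 (hW.sup_eq_top ▸ Submodule.mem_top (x := v))
  rw [map_add, hS _ _ (hx w hw), hS _ _ (by rw [LinearMap.mem_ker.1 hk, LinearMap.zero_apply]),
    add_zero, LinearMap.zero_apply]

theorem range_eq_orthogonal_ker_of_isSelfAdjoint {K V : Type*} [Field K] [AddCommGroup V]
    [Module K V] [FiniteDimensional K V] {B : BilinForm K V} (hB : B.Nondegenerate)
    {T : V →ₗ[K] V} (hT : LinearMap.IsSelfAdjoint B T) :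
    LinearMap.range T = B.orthogonal (LinearMap.ker T) := by
  refine Submodule.eq_of_le_of_finrank_eq ?_ ?_
  · rintro _ ⟨u, rfl⟩ x hx
    rw [← hT, LinearMap.mem_ker.1 hx, map_zero, LinearMap.zero_apply]
  · rw [finrank_orthogonal hB]
    have := LinearMap.finrank_range_add_finrank_ker T
    omega

variable {V : Type*} [AddCommGroup V] [Module (ZMod 2) V] [FiniteDimensional (ZMod 2) V]

open Matrix in
theorem IsCharacteristic.apply_self_eq_finrank {S : BilinForm (ZMod 2) V} {z : V}
    (hz : S.IsCharacteristic z) (hS : S.IsSymm) (hnd : S.Nondegenerate) :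
    S z z = finrank (ZMod 2) V := by
  let b := Module.finBasis (ZMod 2) V
  set A := toMatrix b S with hA
  have hrow : ∀ i y, (A *ᵥ b.repr y) i = S (b i) y := fun i y ↦ by
    rw [apply_eq_dotProduct_toMatrix_mulVec b S (b i) y, b.repr_self, Finsupp.single_eq_pi_single,
      single_one_dotProduct]
  have hv : A *ᵥ b.repr z = A.diag := funext fun i ↦ by
    rw [hrow, diag_apply, hA, toMatrix_apply, hz]
  have hdet : IsUnit A.det := isUnit_iff_ne_zero.2 ((nondegenerate_iff_det_ne_zero b).1 hnd)
  calc S z z = A.diag ⬝ᵥ b.repr z := by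
        rw [apply_eq_dotProduct_toMatrix_mulVec b S, hv, dotProduct_comm]
    _ = finrank (ZMod 2) V := by
        rw [((S.isSymm_toMatrix_iff_isSymm b).2 hS).diag_dotProduct_eq_card hdet hv,
          Fintype.card_fin]

theorem IsCharacteristic.apply_self_eq_finrank_range {S : BilinForm (ZMod 2) V} {z : V}
    (hz : S.IsCharacteristic z) (hS : S.IsSymm) :
    S z z = finrank (ZMod 2) (LinearMap.range S) := by
  obtain ⟨W, hW⟩ := (LinearMap.ker S).exists_isCompl
  obtain ⟨z₁, hz₁, z₂, hz₂, rfl⟩ :=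
    Submodule.mem_sup.1 (hW.symm.sup_eq_top ▸ Submodule.mem_top (x := z))
  have hz₂' : ∀ x, S x z₂ = 0 := fun x ↦ by
    rw [hS.eq, LinearMap.mem_ker.1 hz₂, LinearMap.zero_apply]
  have hchar : (S.restrict W).IsCharacteristic ⟨z₁, hz₁⟩ := fun x ↦ by
    change S x x = S x z₁
    rw [hz, map_add, hz₂', add_zero]
  calc S (z₁ + z₂) (z₁ + z₂) = S z₁ z₁ := by
        rw [map_add, hz₂', add_zero, map_add, LinearMap.mem_ker.1 hz₂, LinearMap.add_apply,
          LinearMap.zero_apply, add_zero]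
    _ = finrank (ZMod 2) W :=
        hchar.apply_self_eq_finrank ⟨fun x y ↦ hS.eq x y⟩
          (nondegenerate_restrict_of_isCompl_ker hS.isRefl hW.symm)
    _ = finrank (ZMod 2) (LinearMap.range S) := by
        congr 1
        have := LinearMap.finrank_range_add_finrank_ker S
        have := Submodule.finrank_add_eq_of_isCompl hW
        omega

theorem apply_apply_self_eq_finrank_range_of_isSelfAdjoint {B : BilinForm (ZMod 2) V}
    (hB : B.IsSymm) (hBinj : Function.Injective B) {T : V →ₗ[ZMod 2] V}
    (hT : LinearMap.IsSelfAdjoint B T) {z : V} (hz : ∀ x, B (T x) x = B x (T z)) :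
    B z (T z) = finrank (ZMod 2) (LinearMap.range T) := by
  have hS : IsSymm (B ∘ₗ T) := ⟨fun x y ↦ by
    rw [LinearMap.comp_apply, LinearMap.comp_apply, hT, hB.eq]⟩
  have hchar : IsCharacteristic (B ∘ₗ T) z := fun x ↦ (hz x).trans (hT x z).symm
  calc B z (T z) = (B ∘ₗ T) z z := (hT z z).symm
    _ = finrank (ZMod 2) (LinearMap.range T) := by
        rw [hchar.apply_self_eq_finrank_range hS, LinearMap.range_comp,
          (Submodule.equivMapOfInjective B hBinj _).finrank_eq]

end LinearMap.BilinForm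

open LinearMap in
/-- The characteristic element w of c belongs to I₀ = φ(V₀) if
d = dim I is even, and to I₁ = I \ I₀ if d is odd.  Equivalently, writing
w = φ(z), one has B(z, c z) = d (mod 2).  Here V₀ = ker (B.flip w). -/
theorem stmt_4
    (V : Type*) [AddCommGroup V] [Module (ZMod 2) V] [FiniteDimensional (ZMod 2) V]
    (B : V →ₗ[ZMod 2] V →ₗ[ZMod 2] ZMod 2)
    (hBalt : ∀ x, B x x = 0)
    (hBnd : ∀ x, (∀ y, B x y = 0) → x = 0)
    (c : V →ₗ[ZMod 2] V)
    (hc : ∀ x, c (c x) = x)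
    (hBc : ∀ x y, B (c x) (c y) = B x y)
    (φ : V →ₗ[ZMod 2] V) (hφ : φ = LinearMap.id + c)
    (w : V) (hw : ∀ x, B x (c x) = B x w) :
    (Even (Module.finrank (ZMod 2) ↥(LinearMap.range φ)) →
      w ∈ Submodule.map φ (LinearMap.ker (B.flip w))) ∧
    (¬ Even (Module.finrank (ZMod 2) ↥(LinearMap.range φ)) →
      w ∈ LinearMap.range φ ∧ w ∉ Submodule.map φ (LinearMap.ker (B.flip w))) ∧
    (∀ z, φ z = w →
      B z (c z) = (Module.finrank (ZMod 2) ↥(LinearMap.range φ) : ZMod 2)) := by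
  have hBsymm : BilinForm.IsSymm B := ⟨fun x y ↦ by rw [← IsAlt.neg hBalt y x, CharTwo.neg_eq]⟩
  have hBsep : SeparatingLeft B := hBnd
  have hc_adj : LinearMap.IsSelfAdjoint B c := fun x y ↦ by rw [← hBc x (c y), hc]
  have hφ_adj : LinearMap.IsSelfAdjoint B φ := hφ ▸ isAdjointPair_id.add hc_adj
  have hφw : ∀ x, B (φ x) x = B x w := fun x ↦ by
    rw [hφ, LinearMap.add_apply, id_apply, map_add, LinearMap.add_apply, hBalt, zero_add,
      hBsymm.eq, hw]
  have hform : ∀ z, φ z = w → B z (c z) = finrank (ZMod 2) (range φ) := fun z hz ↦ by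
    rw [hw, ← hz]
    exact BilinForm.apply_apply_self_eq_finrank_range_of_isSelfAdjoint hBsymm
      (ker_eq_bot.1 (separatingLeft_iff_ker_eq_bot.1 hBsep)) hφ_adj fun x ↦ hz ▸ hφw x
  obtain ⟨z, hz⟩ : w ∈ range φ := by
    rw [BilinForm.range_eq_orthogonal_ker_of_isSelfAdjoint
      (hBsymm.isRefl.nondegenerate_iff_separatingLeft.2 hBsep) hφ_adj]
    intro x hx
    rw [← hφw, mem_ker.1 hx, map_zero, LinearMap.zero_apply]
  refine ⟨fun heven ↦ ⟨z, ?_, hz⟩, fun hodd ↦ ⟨⟨z, hz⟩, ?_⟩, hform⟩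
  · rw [SetLike.mem_coe, mem_ker, flip_apply, ← hw, hform z hz, ZMod.natCast_eq_zero_iff_even]
    exact heven
  · rintro ⟨z', hz', hz'w⟩
    rw [SetLike.mem_coe, mem_ker, flip_apply, ← hw, hform z' hz'w,
      ZMod.natCast_eq_zero_iff_even] at hz'
    exact hodd hz'
end

section
/- The residual pairing on I, defined for a = φ(x) and b = φ(y) by ⟨a, b⟩_I := B(x, b), is well defined (independent of the choice of x with φ(x) = a), symmetric, 𝔽₂-bilinear, and nondegenerate on I; moreover its characteristic element is w, that is, ⟨a, a⟩_I = ⟨w, a⟩_I for every a ∈ I. -/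
/-- The residual pairing on I = range φ, defined for a = φ(x),
b = φ(y) by ⟨a, b⟩_I := B(x, b), is well defined (independent of the choice of x
with φ(x) = a), symmetric, 𝔽₂-bilinear (additive), and nondegenerate on I;
moreover its characteristic element is w: ⟨a, a⟩_I = ⟨w, a⟩_I for every a ∈ I. -/
theorem stmt_5
    (V : Type*) [AddCommGroup V] [Module (ZMod 2) V] [FiniteDimensional (ZMod 2) V]
    (B : V →ₗ[ZMod 2] V →ₗ[ZMod 2] ZMod 2)
    (hBalt : ∀ x, B x x = 0)
    (hBnd : ∀ x, (∀ y, B x y = 0) → x = 0)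
    (c : V →ₗ[ZMod 2] V)
    (hc : ∀ x, c (c x) = x)
    (hBc : ∀ x y, B (c x) (c y) = B x y)
    (φ : V →ₗ[ZMod 2] V) (hφ : φ = LinearMap.id + c)
    (w : V) (hw : ∀ x, B x (c x) = B x w) :
    -- well defined
    (∀ x x' y, φ x = φ x' → B x (φ y) = B x' (φ y)) ∧
    -- symmetric
    (∀ x y, B x (φ y) = B y (φ x)) ∧
    -- additive (𝔽₂-bilinear)
    (∀ x₁ x₂ y, B (x₁ + x₂) (φ y) = B x₁ (φ y) + B x₂ (φ y)) ∧
    -- nondegenerate on I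
    (∀ x, (∀ y, B x (φ y) = 0) → φ x = 0) ∧
    -- characteristic element is w
    (∀ z x, φ z = w → B x (φ x) = B z (φ x)) := by
  -- symmetry of B
  have hsym : ∀ x y, B x y = B y x := by
    intro x y
    have h := hBalt (x + y)
    simp only [map_add, LinearMap.add_apply, hBalt, zero_add, add_zero] at h
    have : B x y = -B y x := eq_neg_of_add_eq_zero_right h
    simpa [CharTwo.neg_eq] using this
  -- moving c across B
  have hcross : ∀ x y, B x (c y) = B (c x) y := by
    intro x y
    rw [← hBc x (c y), hc]
  -- φ is self-adjoint
  have hadj : ∀ x y, B (φ x) y = B x (φ y) := by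
    intro x y
    simp only [hφ, LinearMap.add_apply, LinearMap.id_apply, map_add]
    rw [hcross x y]
  refine ⟨?_, ?_, ?_, ?_, ?_⟩
  · intro x x' y h
    rw [← hadj, ← hadj, h]
  · intro x y
    rw [← hadj, hsym]
  · intro x₁ x₂ y
    simp [map_add]
  · intro x h
    apply hBnd
    intro y
    rw [hadj]
    exact h y
  · intro z x h
    have h1 : B x (φ x) = B x w := by
      simp only [hφ, LinearMap.add_apply, LinearMap.id_apply, map_add, hBalt, zero_add]
      exact hw x
    rw [h1, ← h, ← hadj, hsym]
end

section
/- If h ∈ I₀ and h ≠ 0, then d = d' + 2, i.e. the rank of id + c on V exceeds the rank of the induced involution's map id + c' on V' = V^h / span{h} exactly by 2. -/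
set_option maxHeartbeats 1000000

/-- If h ∈ I₀ and h ≠ 0, then d = d' + 2: the rank of id + c on V
exceeds the rank of the induced map id + c' on V' = V^h / span{h} exactly by 2.
Here V^h = ker (B.flip h) = {x : B(x,h) = 0}, π : V^h → V' is the quotient map
(surjective, with kernel span{h} = {0, h}), and c' is the induced involution. -/
theorem stmt_6
    (V : Type*) [AddCommGroup V] [Module (ZMod 2) V] [FiniteDimensional (ZMod 2) V]
    (B : V →ₗ[ZMod 2] V →ₗ[ZMod 2] ZMod 2)
    (hBalt : ∀ x, B x x = 0)
    (hBnd : ∀ x, (∀ y, B x y = 0) → x = 0)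
    (c : V →ₗ[ZMod 2] V)
    (hc : ∀ x, c (c x) = x)
    (hBc : ∀ x y, B (c x) (c y) = B x y)
    (φ : V →ₗ[ZMod 2] V) (hφ : φ = LinearMap.id + c)
    (h : V) (hh0 : h ≠ 0)
    (hhI0 : ∃ x, B x (c x) = 0 ∧ φ x = h)
    (V' : Type*) [AddCommGroup V'] [Module (ZMod 2) V'] [FiniteDimensional (ZMod 2) V']
    (π : ↥(LinearMap.ker (B.flip h)) →ₗ[ZMod 2] V')
    (hπsurj : Function.Surjective π)
    (hπker : ∀ x : ↥(LinearMap.ker (B.flip h)), π x = 0 ↔ ((x : V) = 0 ∨ (x : V) = h))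
    (hcVh : ∀ x : ↥(LinearMap.ker (B.flip h)), c (x : V) ∈ LinearMap.ker (B.flip h))
    (c' : V' →ₗ[ZMod 2] V')
    (hπc : ∀ x : ↥(LinearMap.ker (B.flip h)), π ⟨c (x : V), hcVh x⟩ = c' (π x)) :
    Module.finrank (ZMod 2) ↥(LinearMap.range φ) =
      Module.finrank (ZMod 2) ↥(LinearMap.range (LinearMap.id + c')) + 2 := by
  classical
  obtain ⟨x₀, hx₀B, hx₀φ⟩ := hhI0
  -- basic char-2 facts
  have habk : ∀ a b : ZMod 2, a + b = 0 → b = a := by decide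
  have habself : ∀ a : ZMod 2, a + a = 0 := by decide
  have haddself : ∀ v : V, v + v = 0 := by
    intro v
    have h2 : (2 : ZMod 2) • v = v + v := two_smul _ v
    rw [show (2 : ZMod 2) = 0 by decide, zero_smul] at h2
    exact h2.symm
  have heq_of_add : ∀ a b : V, a + b = 0 → b = a := by
    intro a b hab
    have hx : a + (a + b) = b := by rw [← add_assoc, haddself, zero_add]
    rw [hab, add_zero] at hx; exact hx.symm
  have hsym : ∀ x y : V, B y x = B x y := by
    intro x y
    have hx := hBalt (x + y)
    simp only [map_add, LinearMap.add_apply, hBalt, zero_add, add_zero] at hx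
    exact (habk _ _ hx).symm
  have hmem : ∀ x : V, x ∈ LinearMap.ker (B.flip h) ↔ B x h = 0 := by
    intro x
    simp [LinearMap.mem_ker, LinearMap.flip_apply]
  -- h = x₀ + c x₀
  have hxc : x₀ + c x₀ = h := by
    rw [hφ] at hx₀φ; simpa using hx₀φ
  have hch : c h = h := by
    rw [← hxc, map_add, hc, add_comm]
  have hφapp : ∀ x, φ x = x + c x := by
    intro x; rw [hφ]; simp
  -- elements of ker φ are fixed by c, and pair to 0 with h
  have hkfix : ∀ k, φ k = 0 → c k = k := by
    intro k hk
    rw [hφapp] at hk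
    exact heq_of_add _ _ hk
  have hkh : ∀ k, c k = k → B k h = 0 := by
    intro k hck
    have h1 : B k (c x₀) = B k x₀ := by
      rw [← hBc k x₀, hck]
    rw [← hxc, map_add, h1]
    exact habself _
  -- x₀, h ∈ ker (B.flip h)
  have hx₀m : x₀ ∈ LinearMap.ker (B.flip h) := by
    rw [hmem, ← hxc, map_add, hBalt, zero_add, hx₀B]
  have hhm : h ∈ LinearMap.ker (B.flip h) := by rw [hmem]; exact hBalt h
  -- φ maps the hyperplane into itself
  have hφm : ∀ x ∈ LinearMap.ker (B.flip h), φ x ∈ LinearMap.ker (B.flip h) := by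
    intro x hx
    rw [hmem] at hx ⊢
    rw [hφapp, map_add, LinearMap.add_apply, hx, zero_add, ← hch, hBc]
    exact hx
  set ψ : ↥(LinearMap.ker (B.flip h)) →ₗ[ZMod 2] ↥(LinearMap.ker (B.flip h)) :=
    φ.restrict hφm with hψdef
  -- commuting square
  have hcom : ∀ x : ↥(LinearMap.ker (B.flip h)), π (ψ x) = π x + c' (π x) := by
    intro x
    have hval : ψ x = x + ⟨c (x : V), hcVh x⟩ := by
      apply Subtype.ext
      simp [hψdef, LinearMap.restrict_apply, hφapp]
    rw [hval, map_add, hπc]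
  -- range (id + c') = map π (range ψ)
  have hranges : LinearMap.range (LinearMap.id + c') = Submodule.map π (LinearMap.range ψ) := by
    have h1 : (LinearMap.id + c').comp π = π.comp ψ := by
      ext x
      simp only [LinearMap.comp_apply, LinearMap.add_apply, LinearMap.id_apply]
      rw [hcom]
    calc LinearMap.range (LinearMap.id + c')
        = LinearMap.range ((LinearMap.id + c').comp π) :=
          (LinearMap.range_comp_of_range_eq_top _ (LinearMap.range_eq_top.mpr hπsurj)).symm
      _ = LinearMap.range (π.comp ψ) := by rw [h1]
      _ = Submodule.map π (LinearMap.range ψ) := LinearMap.range_comp _ _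
  -- hbar ∈ range ψ
  have hbarmem : (⟨h, hhm⟩ : ↥(LinearMap.ker (B.flip h))) ∈ LinearMap.range ψ := by
    refine ⟨⟨x₀, hx₀m⟩, ?_⟩
    apply Subtype.ext
    simp [hψdef, LinearMap.restrict_apply, hx₀φ]
  -- ρ : range ψ → V'
  set ρ : ↥(LinearMap.range ψ) →ₗ[ZMod 2] V' := π.comp (LinearMap.range ψ).subtype with hρdef
  have hρrange : LinearMap.range ρ = Submodule.map π (LinearMap.range ψ) := by
    rw [hρdef, LinearMap.range_comp, Submodule.range_subtype]
  set g : ↥(LinearMap.range ψ) := ⟨⟨h, hhm⟩, hbarmem⟩ with hgdef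
  have hg0 : g ≠ 0 := by
    intro hg
    apply hh0
    have := congrArg (fun z : ↥(LinearMap.range ψ) => ((z : ↥(LinearMap.ker (B.flip h))) : V)) hg
    simpa [hgdef] using this
  have hρker : LinearMap.ker ρ = Submodule.span (ZMod 2) {g} := by
    apply le_antisymm
    · intro x hx
      rw [LinearMap.mem_ker, hρdef, LinearMap.comp_apply] at hx
      rcases (hπker _).mp hx with h0 | hh
      · have : x = 0 := by
          apply Subtype.ext; apply Subtype.ext; simpa using h0
        rw [this]; exact Submodule.zero_mem _
      · have : x = g := by
          apply Subtype.ext; apply Subtype.ext; simpa [hgdef] using hh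
        rw [this]; exact Submodule.mem_span_singleton_self _
    · rw [Submodule.span_le, Set.singleton_subset_iff]
      rw [SetLike.mem_coe, LinearMap.mem_ker, hρdef, LinearMap.comp_apply]
      exact (hπker _).mpr (Or.inr rfl)
  have hρkerrank : Module.finrank (ZMod 2) ↥(LinearMap.ker ρ) = 1 := by
    rw [hρker]
    exact finrank_span_singleton hg0
  have hrankψρ : Module.finrank (ZMod 2) ↥(LinearMap.range ψ) =
      Module.finrank (ZMod 2) ↥(LinearMap.range ρ) + 1 := by
    have := LinearMap.finrank_range_add_finrank_ker ρ
    rw [hρkerrank] at this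
    exact this.symm
  -- W = φ(hyperplane) as submodule of V
  set W : Submodule (ZMod 2) V := Submodule.map φ (LinearMap.ker (B.flip h)) with hWdef
  have hWsub : W = Submodule.map (LinearMap.ker (B.flip h)).subtype (LinearMap.range ψ) := by
    ext v
    constructor
    · rintro ⟨x, hx, rfl⟩
      exact ⟨ψ ⟨x, hx⟩, ⟨⟨x, hx⟩, rfl⟩, by simp [hψdef, LinearMap.restrict_apply]⟩
    · rintro ⟨y, ⟨z, rfl⟩, rfl⟩
      exact ⟨(z : V), z.2, by simp [hψdef, LinearMap.restrict_apply]⟩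
  have hWrank : Module.finrank (ZMod 2) ↥W = Module.finrank (ZMod 2) ↥(LinearMap.range ψ) := by
    rw [hWsub]
    exact Submodule.finrank_map_subtype_eq (LinearMap.ker (B.flip h)) (LinearMap.range ψ)
  -- W ≤ range φ strictly
  have hWle : W ≤ LinearMap.range φ := by
    rintro v ⟨x, _, rfl⟩; exact ⟨x, rfl⟩
  obtain ⟨y, hy⟩ : ∃ y, B y h ≠ 0 := by
    by_contra hcon
    push_neg at hcon
    exact hh0 (hBnd h (fun z => by rw [← hsym]; exact hcon z))
  have hφyW : φ y ∉ W := by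
    rintro ⟨u, hu, huy⟩
    have hk : φ (y + u) = 0 := by
      rw [map_add, huy, haddself]
    have hck := hkfix _ hk
    have hbyu := hkh _ hck
    rw [map_add, LinearMap.add_apply] at hbyu
    rw [(hmem u).mp hu, add_zero] at hbyu
    exact hy hbyu
  have hWlt : W < LinearMap.range φ := lt_of_le_of_ne hWle (by
    intro hEq
    exact hφyW (hEq ▸ ⟨y, rfl⟩))
  -- range φ ≤ W ⊔ span {φ y}
  have hyh1 : B y h = 1 := by
    revert hy; generalize B y h = a; revert a; decide
  have htop : (⊤ : Submodule (ZMod 2) V) =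
      LinearMap.ker (B.flip h) ⊔ Submodule.span (ZMod 2) {y} := by
    apply le_antisymm
    · intro v _
      have hmem1 : v + (B v h) • y ∈ LinearMap.ker (B.flip h) := by
        rw [hmem, map_add, LinearMap.add_apply, map_smul, LinearMap.smul_apply, hyh1,
          smul_eq_mul, mul_one]
        exact habself _
      have hmem2 : (B v h) • y ∈ Submodule.span (ZMod 2) {y} :=
        Submodule.smul_mem _ _ (Submodule.mem_span_singleton_self y)
      have hv : v = (v + (B v h) • y) + (B v h) • y := by
        rw [add_assoc, haddself, add_zero]
      rw [hv]
      exact Submodule.add_mem _ (Submodule.mem_sup_left hmem1) (Submodule.mem_sup_right hmem2)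
    · exact le_top
  have hφy0 : φ y ≠ 0 := by
    intro h0
    exact hy (hkh _ (hkfix _ h0))
  have hrangele : Module.finrank (ZMod 2) ↥(LinearMap.range φ) ≤
      Module.finrank (ZMod 2) ↥W + 1 := by
    have hmap : LinearMap.range φ = W ⊔ Submodule.span (ZMod 2) {φ y} := by
      rw [← Submodule.map_top, htop, Submodule.map_sup, hWdef, Submodule.map_span,
        Set.image_singleton]
    rw [hmap]
    have h1 := Submodule.finrank_sup_add_finrank_inf_eq W (Submodule.span (ZMod 2) {φ y})
    have h2 : Module.finrank (ZMod 2) ↥(Submodule.span (ZMod 2) {φ y}) = 1 :=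
      finrank_span_singleton hφy0
    omega
  have hstrict : Module.finrank (ZMod 2) ↥W < Module.finrank (ZMod 2) ↥(LinearMap.range φ) :=
    Submodule.finrank_lt_finrank_of_lt hWlt
  have hrankeq : Module.finrank (ZMod 2) ↥(LinearMap.range φ) =
      Module.finrank (ZMod 2) ↥W + 1 := by omega
  -- conclude
  have hfinal : Module.finrank (ZMod 2) ↥(LinearMap.range (LinearMap.id + c')) =
      Module.finrank (ZMod 2) ↥(LinearMap.range ρ) := by
    rw [hranges, ← hρrange]
  rw [hrankeq, hWrank, hrankψρ, hfinal]
end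

section
/- If h ∈ I₁ (i.e. h = φ(x) for some x with B(x, c x) = 1; such h is automatically nonzero), then d = d' + 1, i.e. the rank of id + c on V exceeds the rank of the induced map id + c' on V' = V^h / span{h} exactly by 1. -/
set_option maxHeartbeats 1000000 in
/-- If h ∈ I₁ (i.e. h = φ(x) with B(x, c x) = 1; such h is nonzero), then
d = d' + 1: the rank of id + c on V
exceeds the rank of the induced map id + c' on V' = V^h / span{h} exactly by 1.
Here V^h = ker (B.flip h) = {x : B(x,h) = 0}, π : V^h → V' is the quotient map
(surjective, with kernel span{h} = {0, h}), and c' is the induced involution. -/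
theorem stmt_7
    (V : Type*) [AddCommGroup V] [Module (ZMod 2) V] [FiniteDimensional (ZMod 2) V]
    (B : V →ₗ[ZMod 2] V →ₗ[ZMod 2] ZMod 2)
    (hBalt : ∀ x, B x x = 0)
    (hBnd : ∀ x, (∀ y, B x y = 0) → x = 0)
    (c : V →ₗ[ZMod 2] V)
    (hc : ∀ x, c (c x) = x)
    (hBc : ∀ x y, B (c x) (c y) = B x y)
    (φ : V →ₗ[ZMod 2] V) (hφ : φ = LinearMap.id + c)
    (h : V)
    (hhI1 : ∃ x, B x (c x) = 1 ∧ φ x = h)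
    (V' : Type*) [AddCommGroup V'] [Module (ZMod 2) V'] [FiniteDimensional (ZMod 2) V']
    (π : ↥(LinearMap.ker (B.flip h)) →ₗ[ZMod 2] V')
    (hπsurj : Function.Surjective π)
    (hπker : ∀ x : ↥(LinearMap.ker (B.flip h)), π x = 0 ↔ ((x : V) = 0 ∨ (x : V) = h))
    (hcVh : ∀ x : ↥(LinearMap.ker (B.flip h)), c (x : V) ∈ LinearMap.ker (B.flip h))
    (c' : V' →ₗ[ZMod 2] V')
    (hπc : ∀ x : ↥(LinearMap.ker (B.flip h)), π ⟨c (x : V), hcVh x⟩ = c' (π x)) :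
    Module.finrank (ZMod 2) ↥(LinearMap.range φ) =
      Module.finrank (ZMod 2) ↥(LinearMap.range (LinearMap.id + c')) + 1 := by
  classical
  obtain ⟨x₀, hx1, hx2⟩ := hhI1
  have hmemW : ∀ v : V, v ∈ LinearMap.ker (B.flip h) ↔ B v h = 0 := by
    intro v; simp [LinearMap.mem_ker]
  have hchar : ∀ v : V, v + v = 0 := by
    intro v
    have h2 : (2 : ZMod 2) • v = (0 : ZMod 2) • v := by congr 1
    simpa [two_smul] using h2
  have hZ2 : ∀ a b : ZMod 2, a + b = 0 → a = b := by decide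
  have hφx : ∀ v, φ v = v + c v := by intro v; simp [hφ]
  have hsymm : ∀ x y, B x y = B y x := by
    intro x y
    have h1 := hBalt (x + y)
    simp only [map_add, LinearMap.add_apply, hBalt] at h1
    exact hZ2 _ _ (by linear_combination h1)
  have hch : c h = h := by
    rw [← hx2, hφx, map_add, hc, add_comm]
  have hx0h : B x₀ h = 1 := by
    rw [← hx2, hφx, map_add, hBalt, zero_add, hx1]
  have hck : ∀ k, φ k = 0 → c k = k := by
    intro k hk
    rw [hφx] at hk
    have h2 : k + (k + c k) = k + 0 := congrArg (fun t => k + t) hk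
    rwa [← add_assoc, hchar, zero_add, add_zero] at h2
  -- key: no w ∈ W maps to h
  have hnot : ∀ w : V, B w h = 0 → φ w ≠ h := by
    intro w hw heq
    have hφk : φ (x₀ + w) = 0 := by
      rw [map_add, hx2, heq, hchar]
    have hckk : c (x₀ + w) = x₀ + w := hck _ hφk
    have hcw : c w = w + h := by
      have h0 : w + c w = h := by rw [← hφx, heq]
      have h2 := congrArg (fun t => w + t) h0
      simpa [← add_assoc, hchar w] using h2
    have h1 : B (x₀ + w) h = 1 := by
      rw [map_add, LinearMap.add_apply, hx0h, hw, add_zero]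
    have h2 : B (x₀ + w) w = B (x₀ + w) (c w) := by
      have h3 := hBc (x₀ + w) (c w)
      rwa [hckk, hc] at h3
    have h5 : B (x₀ + w) (w + h) = B (x₀ + w) w + B (x₀ + w) h :=
      map_add (B (x₀ + w)) w h
    rw [hcw, h5] at h2
    have h4 : B (x₀ + w) h = 0 := left_eq_add.mp h2
    rw [h1] at h4
    exact one_ne_zero h4
  have hhne : h ≠ 0 := by
    intro h0
    rw [h0, map_zero] at hx0h
    exact one_ne_zero hx0h.symm
  -- φ maps W into W
  have hφW : ∀ v : V, v ∈ LinearMap.ker (B.flip h) → φ v ∈ LinearMap.ker (B.flip h) := by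
    intro v hv
    rw [hmemW] at hv ⊢
    rw [hφx, map_add, LinearMap.add_apply, hv, zero_add, ← hch, hBc]
    exact hv
  set S : Submodule (ZMod 2) V := Submodule.map φ (LinearMap.ker (B.flip h)) with hS
  have hhnS : h ∉ S := by
    rintro ⟨w, hwW, hwh⟩
    exact hnot w ((hmemW w).mp hwW) hwh
  -- range φ = S ⊔ span {h}
  have hrange : LinearMap.range φ = S ⊔ Submodule.span (ZMod 2) {h} := by
    apply le_antisymm
    · rintro _ ⟨v, rfl⟩
      by_cases hv : B v h = 0
      · exact Submodule.mem_sup_left ⟨v, (hmemW v).mpr hv, rfl⟩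
      · have hv1 : B v h = 1 := by
          rcases (show ∀ a : ZMod 2, a = 0 ∨ a = 1 by decide) (B v h) with h0 | h1
          · exact absurd h0 hv
          · exact h1
        have hvx : B (v + x₀) h = 0 := by
          rw [map_add, LinearMap.add_apply, hv1, hx0h]
          decide
        have hdec : φ v = φ (v + x₀) + h := by
          rw [map_add, hx2, add_assoc, hchar, add_zero]
        rw [hdec]
        exact Submodule.add_mem_sup ⟨v + x₀, (hmemW _).mpr hvx, rfl⟩
          (Submodule.subset_span rfl)
    · apply sup_le
      · rintro _ ⟨w, _, rfl⟩
        exact LinearMap.mem_range_self φ w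
      · rw [Submodule.span_le, Set.singleton_subset_iff]
        exact ⟨x₀, hx2⟩
  have hdisj : Disjoint S (Submodule.span (ZMod 2) {h}) :=
    (Submodule.disjoint_span_singleton' hhne).mpr hhnS
  have hr1 : Module.finrank (ZMod 2) ↥(LinearMap.range φ) =
      Module.finrank (ZMod 2) ↥S + 1 := by
    rw [hrange]
    have hq := Submodule.finrank_sup_add_finrank_inf_eq S (Submodule.span (ZMod 2) {h})
    rw [hdisj.eq_bot, finrank_bot, add_zero, finrank_span_singleton hhne] at hq
    exact hq
  -- the restriction of φ to W
  set φW : ↥(LinearMap.ker (B.flip h)) →ₗ[ZMod 2] ↥(LinearMap.ker (B.flip h)) :=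
    φ.restrict hφW with hφWdef
  have hπtop : LinearMap.range π = ⊤ := LinearMap.range_eq_top.mpr hπsurj
  have hcomm : π.comp φW = (LinearMap.id + c').comp π := by
    ext x
    simp only [LinearMap.comp_apply, LinearMap.add_apply, LinearMap.id_apply]
    rw [← hπc x, ← map_add]
    congr 1
    apply Subtype.ext
    simp [hφWdef, LinearMap.restrict_apply, hφx]
  set Q : Submodule (ZMod 2) ↥(LinearMap.ker (B.flip h)) := LinearMap.range φW with hQ
  have hrange' : LinearMap.range (LinearMap.id + c') = Submodule.map π Q :=
    calc LinearMap.range (LinearMap.id + c')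
        = LinearMap.range ((LinearMap.id + c').comp π) :=
          (LinearMap.range_comp_of_range_eq_top _ hπtop).symm
      _ = LinearMap.range (π.comp φW) := by rw [hcomm]
      _ = Submodule.map π Q := LinearMap.range_comp _ _
  have hker : LinearMap.ker (π.domRestrict Q) = ⊥ := by
    rw [eq_bot_iff]
    rintro q hq
    have hq0 : π (q : ↥(LinearMap.ker (B.flip h))) = 0 := hq
    rcases (hπker _).mp hq0 with h0 | hh
    · rw [Submodule.mem_bot]
      exact Subtype.ext (Subtype.ext h0)
    · exfalso
      obtain ⟨w, hw⟩ := q.2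
      have hwval : φ (w : V) = ((q : ↥(LinearMap.ker (B.flip h))) : V) := by
        rw [← hw]; rfl
      exact hnot (w : V) ((hmemW _).mp w.2) (by rw [hwval]; exact hh)
  have hfr : Module.finrank (ZMod 2) ↥Q =
      Module.finrank (ZMod 2) ↥(Submodule.map π Q) := by
    have h1 := LinearMap.finrank_range_add_finrank_ker (π.domRestrict Q)
    rw [hker, finrank_bot, add_zero, LinearMap.range_domRestrict] at h1
    exact h1.symm
  have hSQ : S = Submodule.map (LinearMap.ker (B.flip h)).subtype Q := by
    apply le_antisymm
    · rintro _ ⟨w, hwW, rfl⟩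
      exact ⟨φW ⟨w, hwW⟩, ⟨⟨w, hwW⟩, rfl⟩, rfl⟩
    · rintro _ ⟨q, ⟨w, rfl⟩, rfl⟩
      exact ⟨(w : V), w.2, rfl⟩
  have hfrS : Module.finrank (ZMod 2) ↥S = Module.finrank (ZMod 2) ↥Q := by
    rw [hSQ]
    exact Submodule.finrank_map_subtype_eq _ _
  rw [hr1, hrange', ← hfr, hfrS]
end

section
/- If h ∈ K \ I, then d = d', i.e. the rank of id + c on V equals the rank of the induced map id + c' on V' = V^h / span{h}. -/
/-!
Let `ψ` be `φ = id + c` restricted to `V^h`. Since `φ` is self-adjoint for `B` and `h ∉ I`,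
nondegeneracy gives `z ∈ K = I^⊥` with `B(z, h) = 1`; adding a multiple of `z` moves any `x`
into `V^h` without changing `φ x`, so `I = φ(V^h)` is the image of `ψ`. The surjection `π`
intertwines `ψ` with `id + c'`, hence maps the image of `ψ` onto that of `id + c'`, and it is
injective there because its kernel `{0, h}` meets `I` only in `0`.
-/

open LinearMap Module

section Rank

variable {R U W U' W' : Type*} [Ring R] [AddCommGroup U] [Module R U]
  [AddCommGroup W] [Module R W] [AddCommGroup U'] [Module R U'] [AddCommGroup W'] [Module R W']

theorem Submodule.finrank_map_of_disjoint_ker {p : Submodule R W} {π : W →ₗ[R] W'}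
    (hp : Disjoint p (ker π)) : finrank R (p.map π) = finrank R p := by
  rw [← range_domRestrict]
  exact finrank_range_of_inj (injective_domRestrict_iff.mpr hp)

theorem LinearMap.finrank_range_eq_of_comp_eq_comp {ψ : U →ₗ[R] W} {ψ' : U' →ₗ[R] W'}
    {ρ : U →ₗ[R] U'} {π : W →ₗ[R] W'} (hρ : Function.Surjective ρ)
    (hcomm : π ∘ₗ ψ = ψ' ∘ₗ ρ) (hdisj : Disjoint (range ψ) (ker π)) :
    finrank R (range ψ') = finrank R (range ψ) := by
  rw [← range_comp_of_range_eq_top ψ' (range_eq_top.mpr hρ), ← hcomm, range_comp,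
    Submodule.finrank_map_of_disjoint_ker hdisj]

end Rank

namespace LinearMap

section CommRing

variable {R M : Type*} [CommRing R] [AddCommGroup M] [Module R M] {B : LinearMap.BilinForm R M}

theorem isAdjointPair_id_add_of_involutive {c : M →ₗ[R] M} (hc : ∀ x, c (c x) = x)
    (hBc : ∀ x y, B (c x) (c y) = B x y) :
    IsAdjointPair B B (id + c : M →ₗ[R] M) (id + c : M →ₗ[R] M) := by
  intro x y
  have hcy : B (c x) y = B x (c y) := by rw [← hBc x (c y), hc]
  simp only [add_apply, id_apply, map_add, hcy]

theorem map_ker_flip_eq_range {φ : M →ₗ[R] M} {h z : M} (hz : φ z = 0) (hzh : B z h = 1) :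
    (ker (B.flip h)).map φ = range φ := by
  refine le_antisymm map_le_range ?_
  rintro _ ⟨y, rfl⟩
  exact ⟨y - B y h • z, by simp [hzh], by simp [hz]⟩

end CommRing

theorem exists_apply_eq_zero_and_apply_eq_one_of_notMem_range {K V : Type*} [Field K]
    [AddCommGroup V] [Module K V] [FiniteDimensional K V] {B : LinearMap.BilinForm K V}
    {φ : V →ₗ[K] V} {h : V} (hB : B.SeparatingLeft) (hφ : IsAdjointPair B B φ φ)
    (hh : h ∉ range φ) : ∃ z, φ z = 0 ∧ B z h = 1 := by
  obtain ⟨f, hfh, hfI⟩ := Submodule.exists_dual_map_eq_bot_of_notMem hh inferInstance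
  have hfφ : ∀ y, f (φ y) = 0 := fun y ↦
    (Submodule.eq_bot_iff _).mp hfI _ (Submodule.mem_map_of_mem (mem_range_self φ y))
  set z := (B.toDual (.ofSeparatingLeft hB)).symm ((f h)⁻¹ • f)
  have hz : ∀ y, B z y = (f h)⁻¹ * f y := by simp [z]
  refine ⟨z, hB (φ z) fun y ↦ ?_, by rw [hz, inv_mul_cancel₀ hfh]⟩
  rw [hφ, hz, hfφ, mul_zero]

end LinearMap

theorem stmt_8_general
    (V : Type*) [AddCommGroup V] [Module (ZMod 2) V] [FiniteDimensional (ZMod 2) V]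
    (B : V →ₗ[ZMod 2] V →ₗ[ZMod 2] ZMod 2)
    (hBnd : ∀ x, (∀ y, B x y = 0) → x = 0)
    (c : V →ₗ[ZMod 2] V)
    (hc : ∀ x, c (c x) = x)
    (hBc : ∀ x y, B (c x) (c y) = B x y)
    (φ : V →ₗ[ZMod 2] V) (hφ : φ = LinearMap.id + c)
    (h : V)
    (hhI : h ∉ LinearMap.range φ)
    (V' : Type*) [AddCommGroup V'] [Module (ZMod 2) V']
    (π : ↥(LinearMap.ker (B.flip h)) →ₗ[ZMod 2] V')
    (hπsurj : Function.Surjective π)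
    (hπker : ∀ x : ↥(LinearMap.ker (B.flip h)), π x = 0 ↔ ((x : V) = 0 ∨ (x : V) = h))
    (hcVh : ∀ x : ↥(LinearMap.ker (B.flip h)), c (x : V) ∈ LinearMap.ker (B.flip h))
    (c' : V' →ₗ[ZMod 2] V')
    (hπc : ∀ x : ↥(LinearMap.ker (B.flip h)), π ⟨c (x : V), hcVh x⟩ = c' (π x)) :
    Module.finrank (ZMod 2) ↥(LinearMap.range φ) =
      Module.finrank (ZMod 2) ↥(LinearMap.range (LinearMap.id + c')) := by
  have hadj : IsAdjointPair B B φ φ := hφ ▸ isAdjointPair_id_add_of_involutive hc hBc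
  obtain ⟨z, hz, hzh⟩ := exists_apply_eq_zero_and_apply_eq_one_of_notMem_range hBnd hadj hhI
  let Vh := ker (B.flip h)
  let ψ : Vh →ₗ[ZMod 2] Vh := LinearMap.id + c.restrict fun x hx ↦ hcVh ⟨x, hx⟩
  have hrange : (range ψ).map Vh.subtype = range φ := by
    have hψ : Vh.subtype ∘ₗ ψ = φ ∘ₗ Vh.subtype := by ext; simp [ψ, hφ]
    rw [← range_comp, hψ, range_comp, Submodule.range_subtype]
    exact map_ker_flip_eq_range hz hzh
  have hcomm : π ∘ₗ ψ = (LinearMap.id + c') ∘ₗ π := by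
    ext x
    simp only [ψ, LinearMap.comp_apply, LinearMap.add_apply, LinearMap.id_apply, map_add]
    exact congrArg (π x + ·) (hπc x)
  have hdisj : Disjoint (range ψ) (ker π) := by
    refine Submodule.disjoint_def.mpr fun w hw hπw ↦ Subtype.ext ?_
    refine ((hπker w).mp (mem_ker.mp hπw)).resolve_right fun hwh ↦ hhI ?_
    rw [← hwh, ← hrange]
    exact Submodule.mem_map_of_mem hw
  rw [← hrange, Submodule.finrank_map_subtype_eq,
    finrank_range_eq_of_comp_eq_comp hπsurj hcomm hdisj]

/-- If h ∈ K \ I (with h ≠ 0), then d = d': the rank of id + c on V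
equals the rank of the induced map id + c' on V' = V^h / span{h}.
Here V^h = ker (B.flip h) = {x : B(x,h) = 0}, π : V^h → V' is the quotient map
(surjective, with kernel span{h} = {0, h}), and c' is the induced involution. -/
theorem stmt_8
    (V : Type*) [AddCommGroup V] [Module (ZMod 2) V] [FiniteDimensional (ZMod 2) V]
    (B : V →ₗ[ZMod 2] V →ₗ[ZMod 2] ZMod 2)
    (hBalt : ∀ x, B x x = 0)
    (hBnd : ∀ x, (∀ y, B x y = 0) → x = 0)
    (c : V →ₗ[ZMod 2] V)
    (hc : ∀ x, c (c x) = x)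
    (hBc : ∀ x y, B (c x) (c y) = B x y)
    (φ : V →ₗ[ZMod 2] V) (hφ : φ = LinearMap.id + c)
    (h : V) (hh0 : h ≠ 0)
    (hhK : c h = h) (hhI : h ∉ LinearMap.range φ)
    (V' : Type*) [AddCommGroup V'] [Module (ZMod 2) V'] [FiniteDimensional (ZMod 2) V']
    (π : ↥(LinearMap.ker (B.flip h)) →ₗ[ZMod 2] V')
    (hπsurj : Function.Surjective π)
    (hπker : ∀ x : ↥(LinearMap.ker (B.flip h)), π x = 0 ↔ ((x : V) = 0 ∨ (x : V) = h))
    (hcVh : ∀ x : ↥(LinearMap.ker (B.flip h)), c (x : V) ∈ LinearMap.ker (B.flip h))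
    (c' : V' →ₗ[ZMod 2] V')
    (hπc : ∀ x : ↥(LinearMap.ker (B.flip h)), π ⟨c (x : V), hcVh x⟩ = c' (π x)) :
    Module.finrank (ZMod 2) ↥(LinearMap.range φ) =
      Module.finrank (ZMod 2) ↥(LinearMap.range (LinearMap.id + c')) :=
  stmt_8_general V B hBnd c hc hBc φ hφ h hhI V' π hπsurj hπker hcVh c' hπc
end

section
/- The characteristic element w of c lies in V^h (i.e. B(w, h) = 0), and the characteristic element of the induced involution c' on V' = V^h / span{h} (the unique w' ∈ V' with B'(x', c' x') = B'(x', w') for all x' ∈ V') is the image of w under the quotient map V^h → V'. In particular, this image vanishes if and only if w = 0 or w = h. -/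
/-- The characteristic element w of c lies in V^h (B(w,h) = 0), and
the characteristic element of the induced involution c' on V' = V^h / span{h}
(the unique w' ∈ V' with B'(x', c' x') = B'(x', w') for all x') is the image π(w)
of w under the quotient map.  In particular this image vanishes iff w = 0 or w = h. -/
theorem stmt_9
    (V : Type*) [AddCommGroup V] [Module (ZMod 2) V] [FiniteDimensional (ZMod 2) V]
    (B : V →ₗ[ZMod 2] V →ₗ[ZMod 2] ZMod 2)
    (hBalt : ∀ x, B x x = 0)
    (hBnd : ∀ x, (∀ y, B x y = 0) → x = 0)
    (c : V →ₗ[ZMod 2] V)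
    (hc : ∀ x, c (c x) = x)
    (hBc : ∀ x y, B (c x) (c y) = B x y)
    (φ : V →ₗ[ZMod 2] V) (hφ : φ = LinearMap.id + c)
    (w : V) (hw : ∀ x, B x (c x) = B x w)
    (h : V) (hh0 : h ≠ 0) (hhK : c h = h)
    (V' : Type*) [AddCommGroup V'] [Module (ZMod 2) V'] [FiniteDimensional (ZMod 2) V']
    (π : ↥(LinearMap.ker (B.flip h)) →ₗ[ZMod 2] V')
    (hπsurj : Function.Surjective π)
    (hπker : ∀ x : ↥(LinearMap.ker (B.flip h)), π x = 0 ↔ ((x : V) = 0 ∨ (x : V) = h))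
    (hcVh : ∀ x : ↥(LinearMap.ker (B.flip h)), c (x : V) ∈ LinearMap.ker (B.flip h))
    (c' : V' →ₗ[ZMod 2] V')
    (hπc : ∀ x : ↥(LinearMap.ker (B.flip h)), π ⟨c (x : V), hcVh x⟩ = c' (π x))
    (B' : V' →ₗ[ZMod 2] V' →ₗ[ZMod 2] ZMod 2)
    (hB'alt : ∀ x', B' x' x' = 0)
    (hB'nd : ∀ x', (∀ y', B' x' y' = 0) → x' = 0)
    (hB'compat : ∀ x y : ↥(LinearMap.ker (B.flip h)), B' (π x) (π y) = B (x : V) (y : V)) :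
    B w h = 0 ∧
    ∀ (hwVh : w ∈ LinearMap.ker (B.flip h)),
      (∀ x' : V', B' x' (c' x') = B' x' (π ⟨w, hwVh⟩)) ∧
      (π ⟨w, hwVh⟩ = 0 ↔ (w = 0 ∨ w = h)) := by
  have hsymm : ∀ x y, B x y = B y x := by
    intro x y
    have h2 := hBalt (x + y)
    simp only [map_add, LinearMap.add_apply, hBalt, zero_add, add_zero] at h2
    have : (2:ZMod 2) = 0 := by decide
    linear_combination h2 - this * B y x
  have hwh : B w h = 0 := by
    have := hw h
    rw [hhK, hBalt] at this
    rw [hsymm]; exact this.symm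
  refine ⟨hwh, fun hwVh => ⟨?_, hπker ⟨w, hwVh⟩⟩⟩
  intro x'
  obtain ⟨x, rfl⟩ := hπsurj x'
  rw [← hπc x, hB'compat, hB'compat]
  exact hw x
end

section
/- If q is a c-invariant quadratic refinement of B, then q(x + c x) = B(x, c x) for every x ∈ V. Consequently, the restriction of q to I = range(id + c) is 𝔽₂-linear, q takes the value 0 on I₀ and the value 1 on I₁, and any two c-invariant quadratic refinements of B agree on I. -/
/-- If q is a c-invariant quadratic refinement of B, then
q(x + c x) = B(x, c x) for every x.  Consequently the restriction of q to
I = range φ (φ = id + c) is 𝔽₂-linear, q takes the value 0 on I₀ = φ(V₀) and 1 on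
I₁ = I \ I₀, and any two c-invariant quadratic refinements of B agree on I. -/
theorem stmt_11
    (V : Type*) [AddCommGroup V] [Module (ZMod 2) V] [FiniteDimensional (ZMod 2) V]
    (B : V →ₗ[ZMod 2] V →ₗ[ZMod 2] ZMod 2)
    (hBalt : ∀ x, B x x = 0)
    (hBnd : ∀ x, (∀ y, B x y = 0) → x = 0)
    (c : V →ₗ[ZMod 2] V)
    (hc : ∀ x, c (c x) = x)
    (hBc : ∀ x y, B (c x) (c y) = B x y)
    (φ : V →ₗ[ZMod 2] V) (hφ : φ = LinearMap.id + c)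
    (q : V → ZMod 2)
    (hq : ∀ x y, q (x + y) = q x + q y + B x y)
    (hqc : ∀ x, q (c x) = q x) :
    (∀ x, q (x + c x) = B x (c x)) ∧
    (∀ x y, q (φ x + φ y) = q (φ x) + q (φ y)) ∧
    (∀ x, B x (c x) = 0 → q (φ x) = 0) ∧
    (∀ a, a ∈ LinearMap.range φ → a ∉ ⇑φ '' {x | B x (c x) = 0} → q a = 1) ∧
    (∀ q' : V → ZMod 2, (∀ x y, q' (x + y) = q' x + q' y + B x y) →
      (∀ x, q' (c x) = q' x) → ∀ x, q (φ x) = q' (φ x)) := by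
  have two : ∀ a : ZMod 2, a + a = 0 := by decide
  have key : ∀ (q : V → ZMod 2), (∀ x y, q (x + y) = q x + q y + B x y) →
      (∀ x, q (c x) = q x) → ∀ x, q (x + c x) = B x (c x) := by
    intro q hq hqc x
    rw [hq, hqc, two, zero_add]
  have hφx : ∀ x, φ x = x + c x := by
    intro x; rw [hφ]; simp
  have hBsym : ∀ x y, B (c x) y = B x (c y) := by
    intro x y
    have := hBc x (c y)
    rwa [hc] at this
  have hBφ : ∀ x y, B (φ x) (φ y) = 0 := by
    intro x y
    rw [hφx, hφx]
    simp only [map_add, LinearMap.add_apply]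
    rw [hBc, hBsym]
    abel_nf
    simp [two_smul, two]
  refine ⟨key q hq hqc, ?_, ?_, ?_, ?_⟩
  · intro x y
    rw [hq, hBφ, add_zero]
  · intro x h
    rw [hφx, key q hq hqc, h]
  · rintro a ⟨x, rfl⟩ h
    have hx : B x (c x) ≠ 0 := fun h0 => h ⟨x, h0, rfl⟩
    have : B x (c x) = 1 := by
      revert hx; generalize B x (c x) = a; revert a; decide
    rw [hφx, key q hq hqc, this]
  · intro q' hq' hqc' x
    rw [hφx, key q hq hqc, key q' hq' hqc']
end

section
/- Suppose q is a c-invariant quadratic refinement of B, the characteristic element w of c is nonzero, and K ≠ I. Then there exists h ∈ K \ I with q(h) = 0. -/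
/-- Suppose q is a c-invariant quadratic refinement of B, the
characteristic element w of c is nonzero, and K ≠ I.  Then there exists
h ∈ K \ I with q(h) = 0. -/
theorem stmt_12
    (V : Type*) [AddCommGroup V] [Module (ZMod 2) V] [FiniteDimensional (ZMod 2) V]
    (B : V →ₗ[ZMod 2] V →ₗ[ZMod 2] ZMod 2)
    (hBalt : ∀ x, B x x = 0)
    (hBnd : ∀ x, (∀ y, B x y = 0) → x = 0)
    (c : V →ₗ[ZMod 2] V)
    (hc : ∀ x, c (c x) = x)
    (hBc : ∀ x y, B (c x) (c y) = B x y)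
    (φ : V →ₗ[ZMod 2] V) (hφ : φ = LinearMap.id + c)
    (w : V) (hw : ∀ x, B x (c x) = B x w) (hw0 : w ≠ 0)
    (q : V → ZMod 2)
    (hq : ∀ x y, q (x + y) = q x + q y + B x y)
    (hqc : ∀ x, q (c x) = q x)
    (hKI : LinearMap.ker φ ≠ LinearMap.range φ) :
    ∃ h, h ∈ LinearMap.ker φ ∧ h ∉ LinearMap.range φ ∧ q h = 0 := by
  have two : ∀ a : ZMod 2, a + a = 0 := by decide
  have hxx : ∀ x : V, x + x = 0 := by
    intro x
    have h2 : (2 : ZMod 2) = 0 := by decide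
    calc x + x = (2 : ZMod 2) • x := (two_smul _ x).symm
    _ = 0 := by rw [h2, zero_smul]
  -- symmetry of B
  have hsymm : ∀ x y, B x y = B y x := by
    intro x y
    have h := hBalt (x + y)
    simp only [map_add, LinearMap.add_apply, hBalt x, hBalt y, zero_add, add_zero] at h
    have key : ∀ a b : ZMod 2, a + b = 0 → a = b := by decide
    exact (key _ _ h).symm
  -- range φ ≤ ker φ
  have hsub : LinearMap.range φ ≤ LinearMap.ker φ := by
    rintro _ ⟨y, rfl⟩
    simp only [LinearMap.mem_ker, hφ, LinearMap.add_apply, LinearMap.id_apply, map_add, hc]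
    rw [add_comm y (c y), add_assoc, ← add_assoc (c y), hxx]

  -- pick k ∈ K \ I
  have hne : ¬ (LinearMap.ker φ ≤ LinearMap.range φ) := fun h => hKI (le_antisymm h hsub)
  obtain ⟨k, hkK, hkI⟩ := SetLike.not_le_iff_exists.mp hne
  -- c fixes elements of K
  have hfix : ∀ x, x ∈ LinearMap.ker φ → c x = x := by
    intro x hx
    have h : x + c x = 0 := by
      simpa [hφ, LinearMap.add_apply] using hx
    calc c x = x + (x + c x) := by rw [← add_assoc, hxx, zero_add]
    _ = x := by rw [h, add_zero]
  -- B k vanishes on range φ for k ∈ K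
  have hBkI : ∀ x, x ∈ LinearMap.ker φ → ∀ y, B x (φ y) = 0 := by
    intro x hx y
    have h1 : B x (c y) = B x y := by
      calc B x (c y) = B (c x) (c y) := by rw [hfix x hx]
      _ = B x y := hBc x y
    simp [hφ, LinearMap.add_apply, map_add, h1, two]
  -- q on range φ
  have hqI : ∀ y, q (φ y) = B y w := by
    intro y
    rw [hφ]
    simp only [LinearMap.add_apply, LinearMap.id_apply]
    rw [hq y (c y), hqc y, hw y]
    rw [two (q y), zero_add]
  -- case on q k
  have hcase : ∀ a : ZMod 2, a = 0 ∨ a = 1 := by decide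
  rcases hcase (q k) with h0 | h1
  · exact ⟨k, hkK, hkI, h0⟩
  · -- find y with B y w = 1
    have : ∃ y, B w y ≠ 0 := by
      by_contra hcon
      push_neg at hcon
      exact hw0 (hBnd w hcon)
    obtain ⟨y, hy⟩ := this
    have hyw : B y w = 1 := by
      rw [hsymm] at hy
      rcases hcase (B y w) with h | h
      · exact absurd h hy
      · exact h
    refine ⟨k + φ y, ?_, ?_, ?_⟩
    · exact add_mem hkK (hsub ⟨y, rfl⟩)
    · rintro ⟨z, hz⟩
      apply hkI
      refine ⟨z + y, ?_⟩
      rw [map_add, hz]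
      rw [add_assoc, hxx, add_zero]
    · rw [hq k (φ y), hqI y, hyw, h1, hBkI k hkK y, add_zero, two]
end

section
/- Suppose q is a quadratic refinement of B and dim_{𝔽₂} K ≥ dim_{𝔽₂} I + 4. Then there exists h ∈ K \ I with q(h) = 0. -/
/-- Suppose q is a quadratic refinement of B and
dim K ≥ dim I + 4 (K = ker φ, I = range φ, φ = id + c).  Then there exists
h ∈ K \ I with q(h) = 0. -/
theorem stmt_13
    (V : Type*) [AddCommGroup V] [Module (ZMod 2) V] [FiniteDimensional (ZMod 2) V]
    (B : V →ₗ[ZMod 2] V →ₗ[ZMod 2] ZMod 2)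
    (hBalt : ∀ x, B x x = 0)
    (hBnd : ∀ x, (∀ y, B x y = 0) → x = 0)
    (c : V →ₗ[ZMod 2] V)
    (hc : ∀ x, c (c x) = x)
    (hBc : ∀ x y, B (c x) (c y) = B x y)
    (φ : V →ₗ[ZMod 2] V) (hφ : φ = LinearMap.id + c)
    (q : V → ZMod 2)
    (hq : ∀ x y, q (x + y) = q x + q y + B x y)
    (hdim : Module.finrank (ZMod 2) ↥(LinearMap.range φ) + 4 ≤
      Module.finrank (ZMod 2) ↥(LinearMap.ker φ)) :
    ∃ h, h ∈ LinearMap.ker φ ∧ h ∉ LinearMap.range φ ∧ q h = 0 := by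
  set K := LinearMap.ker φ with hK
  set I := LinearMap.range φ with hI
  -- x + x = 0 for all x
  have hchar : ∀ v : V, v + v = 0 := by
    intro v
    have : (2 : ZMod 2) • v = 0 := by
      have : (2 : ZMod 2) = 0 := by decide
      rw [this, zero_smul]
    rwa [two_smul] at this
  -- pick x ∈ K \ I
  have hKI : ¬ K ≤ I := by
    intro h
    have := Submodule.finrank_mono h
    omega
  rw [SetLike.not_le_iff_exists] at hKI
  obtain ⟨x, hxK, hxI⟩ := hKI
  -- J = I ⊔ span {x}
  set J := I ⊔ Submodule.span (ZMod 2) {x} with hJ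
  have hJrank : Module.finrank (ZMod 2) J ≤ Module.finrank (ZMod 2) I + 1 := by
    have hx0 : x ≠ 0 := fun h => hxI (h ▸ I.zero_mem)
    have h1 := Submodule.finrank_add_le_finrank_add_finrank I (Submodule.span (ZMod 2) {x})
    rw [finrank_span_singleton hx0] at h1
    exact h1
  -- f : K → ZMod 2, y ↦ B x y
  set f : K →ₗ[ZMod 2] ZMod 2 := (B x).comp K.subtype with hf
  set W := (LinearMap.ker f).map K.subtype with hWdef
  have hWrank : Module.finrank (ZMod 2) K ≤ Module.finrank (ZMod 2) W + 1 := by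
    have h1 := LinearMap.finrank_range_add_finrank_ker f
    have h2 : Module.finrank (ZMod 2) (LinearMap.range f) ≤ 1 := by
      have := Submodule.finrank_le (LinearMap.range f)
      simpa using this
    have h3 : Module.finrank (ZMod 2) W = Module.finrank (ZMod 2) (LinearMap.ker f) :=
      Submodule.finrank_map_subtype_eq K _
    omega
  -- find y ∈ W \ J
  have hWJ : ¬ W ≤ J := by
    intro h
    have := Submodule.finrank_mono h
    omega
  rw [SetLike.not_le_iff_exists] at hWJ
  obtain ⟨y, hyW, hyJ⟩ := hWJ
  obtain ⟨z, hz, hzy⟩ := hyW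
  have hyK : y ∈ K := hzy ▸ z.2
  have hBxy : B x y = 0 := by rw [← hzy]; exact hz
  have hxJ : x ∈ J := Submodule.mem_sup_right (Submodule.mem_span_singleton_self x)
  have hyI : y ∉ I := fun h => hyJ (Submodule.mem_sup_left h)
  have hxyI : x + y ∉ I := by
    intro h
    apply hyJ
    have : y = x + (x + y) := by rw [← add_assoc, hchar x, zero_add]
    rw [this]
    exact J.add_mem hxJ (Submodule.mem_sup_left h)
  have hxyK : x + y ∈ K := K.add_mem hxK hyK
  -- case split on q x, q y
  have h01 : ∀ a : ZMod 2, a = 0 ∨ a = 1 := by decide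
  rcases h01 (q x) with hx0 | hx1
  · exact ⟨x, hxK, hxI, hx0⟩
  rcases h01 (q y) with hy0 | hy1
  · exact ⟨y, hyK, hyI, hy0⟩
  refine ⟨x + y, hxyK, hxyI, ?_⟩
  rw [hq, hx1, hy1, hBxy]
  decide
end

section
/- Suppose q is a c-invariant quadratic refinement of B and dim_{𝔽₂} I ≥ 2. Then there exists a nonzero h ∈ I with q(h) = 0. -/
/-- Suppose q is a c-invariant quadratic refinement of B and
dim I ≥ 2 (I = range φ, φ = id + c).  Then there is a nonzero h ∈ I with q(h) = 0. -/
theorem stmt_14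
    (V : Type*) [AddCommGroup V] [Module (ZMod 2) V] [FiniteDimensional (ZMod 2) V]
    (B : V →ₗ[ZMod 2] V →ₗ[ZMod 2] ZMod 2)
    (hBalt : ∀ x, B x x = 0)
    (hBnd : ∀ x, (∀ y, B x y = 0) → x = 0)
    (c : V →ₗ[ZMod 2] V)
    (hc : ∀ x, c (c x) = x)
    (hBc : ∀ x y, B (c x) (c y) = B x y)
    (φ : V →ₗ[ZMod 2] V) (hφ : φ = LinearMap.id + c)
    (q : V → ZMod 2)
    (hq : ∀ x y, q (x + y) = q x + q y + B x y)
    (hqc : ∀ x, q (c x) = q x)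
    (hdim : 2 ≤ Module.finrank (ZMod 2) ↥(LinearMap.range φ)) :
    ∃ h, h ≠ 0 ∧ h ∈ LinearMap.range φ ∧ q h = 0 := by
  have hchar : ∀ t : ZMod 2, t + t = 0 := by decide
  have hone : ∀ t : ZMod 2, t ≠ 0 → t = 1 := by decide
  -- B vanishes on I × I
  have hBI : ∀ x ∈ LinearMap.range φ, ∀ y ∈ LinearMap.range φ, B x y = 0 := by
    rintro _ ⟨a, rfl⟩ _ ⟨b, rfl⟩
    have hφa : φ a = a + c a := by rw [hφ]; rfl
    have hφb : φ b = b + c b := by rw [hφ]; rfl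
    have h1 : B (c a) b = B a (c b) := by
      conv_lhs => rw [← hc b]
      rw [hBc]
    rw [hφa, hφb]
    have : B (a + c a) (b + c b)
        = (B a b + B a b) + (B a (c b) + B a (c b)) := by
      rw [map_add]
      simp only [LinearMap.add_apply, map_add, hBc a b, h1]
      ring
    rw [this, hchar, hchar, add_zero]
  -- q is additive on I
  have hqadd : ∀ x ∈ LinearMap.range φ, ∀ y ∈ LinearMap.range φ,
      q (x + y) = q x + q y := by
    intro x hx y hy
    rw [hq, hBI x hx y hy, add_zero]
  -- pick two linearly independent elements of I
  set S := LinearMap.range φ with hS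
  haveI : FiniteDimensional (ZMod 2) S := inferInstance
  let b := Module.finBasis (ZMod 2) S
  let i0 : Fin (Module.finrank (ZMod 2) S) := ⟨0, by omega⟩
  let i1 : Fin (Module.finrank (ZMod 2) S) := ⟨1, by omega⟩
  set x : S := b i0 with hx
  set y : S := b i1 with hy
  have hxne : (x : V) ≠ 0 := fun h => b.ne_zero i0 (Subtype.coe_injective (by simpa using h))
  have hyne : (y : V) ≠ 0 := fun h => b.ne_zero i1 (Subtype.coe_injective (by simpa using h))
  have hxyne : x ≠ y := b.injective.ne (by simp [i0, i1, Fin.ext_iff])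
  have hxyadd : ((x : V) + y) ≠ 0 := by
    intro h
    apply hxyne
    have hxy : x + y = 0 := Subtype.coe_injective (by simpa using h)
    have hyy : y + y = (0 : S) := by
      calc y + y = (2 : ZMod 2) • y := (two_smul _ y).symm
        _ = (0 : ZMod 2) • y := by rw [show (2 : ZMod 2) = 0 by decide]
        _ = 0 := zero_smul _ y
    have := congrArg (· + y) hxy
    simpa [add_assoc, hyy] using this
  by_cases h0 : q x = 0
  · exact ⟨x, hxne, x.2, h0⟩
  by_cases h1 : q y = 0
  · exact ⟨y, hyne, y.2, h1⟩
  refine ⟨(x : V) + y, hxyadd, S.add_mem x.2 y.2, ?_⟩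
  rw [hqadd _ x.2 _ y.2, hone _ h0, hone _ h1]
  decide
end

section
/- The cubic hypersurface X = {f = 0} ⊂ P⁴ is nonsingular at every point of the line l = {x = y = z = 0} — that is, for every (u₀, v₀) ∈ ℂ² \ {(0,0)}, at least one of the five partial derivatives of f is nonzero at the point (0,0,0,u₀,v₀) — if and only if the quadratic form Q_Θ = L₁₁L₂₂ − L₁₂² is neither the zero polynomial nor the square of a homogeneous linear polynomial in x, y, z. -/
/-!
The forms `Q₁, Q₂, C` lie in `(x, y, z)²`, so along `l` only the terms with `L₁₁, L₁₂, L₂₂`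
contribute to the gradient of `f`: at `(0,0,0,u,v)` it is the coefficient vector of the linear
form `G_{u,v} = u²L₁₁ + 2uvL₁₂ + v²L₂₂`. Thus `X` is smooth along `l` iff `G_{u,v} ≠ 0` for all
`(u,v) ≠ 0`. If `G_{u,v} = 0`, the identity `v²Q_Θ = L₁₁G_{u,v} - (uL₁₁ + vL₁₂)²` exhibits `Q_Θ`
as minus a square (for `v = 0` it forces `L₁₁ = 0`, and `Q_Θ = -L₁₂²`). Conversely, if `Q_Θ = M²`
then `L₁₁L₂₂ = (L₁₂ + iM)(L₁₂ - iM)`; the prime linear form `L₁₁` divides one factor, say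
`L₁₂ ± iM = cL₁₁`, and then `L₁₁G_{-c,1} = (L₁₂ - cL₁₁)² + Q_Θ = 0`. Finally `Q_Θ = 0` is the
square of the zero form.
-/

open MvPolynomial

theorem Finsupp.eq_single_of_degree_eq_one {σ : Type*} {m : σ →₀ ℕ} (h : m.degree = 1) :
    ∃ j, m = Finsupp.single j 1 := by
  obtain ⟨j, hj⟩ : m.support.Nonempty := by
    rw [Finsupp.support_nonempty_iff]; rintro rfl; simp at h
  have hle : Finsupp.single j 1 ≤ m :=
    Finsupp.single_le_iff.mpr (Nat.one_le_iff_ne_zero.mpr (Finsupp.mem_support_iff.mp hj))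
  have hdeg := congrArg Finsupp.degree (tsub_add_cancel_of_le hle)
  rw [map_add, Finsupp.degree_single, h, add_eq_right, Finsupp.degree_eq_zero_iff,
    tsub_eq_zero_iff_le] at hdeg
  exact ⟨j, le_antisymm hdeg hle⟩

namespace MvPolynomial

section CommSemiring

variable {σ R : Type*} [CommSemiring R]

theorem IsHomogeneous.exists_coeff_single_ne_zero_iff {G : MvPolynomial σ R}
    (hG : G.IsHomogeneous 1) : (∃ i, coeff (Finsupp.single i 1) G ≠ 0) ↔ G ≠ 0 := by
  refine ⟨fun ⟨i, hi⟩ hG0 => hi (by rw [hG0, coeff_zero]), fun hG0 => ?_⟩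
  obtain ⟨m, hm⟩ := ne_zero_iff.mp hG0
  obtain ⟨i, rfl⟩ := Finsupp.eq_single_of_degree_eq_one (not_not.mp (mt hG.coeff_eq_zero hm))
  exact ⟨i, hm⟩

theorem constantCoeff_pderiv (i : σ) (P : MvPolynomial σ R) :
    constantCoeff (pderiv i P) = coeff (Finsupp.single i 1) P := by
  simp [constantCoeff_eq, coeff_pderiv]

theorem pderiv_mem_supported {s : Set σ} (i : σ) {P : MvPolynomial σ R}
    (hP : P ∈ supported R s) : pderiv i P ∈ supported R s := by
  induction hP using Algebra.adjoin_induction with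
  | mem x hx =>
    obtain ⟨j, -, rfl⟩ := hx
    rcases eq_or_ne j i with rfl | hji
    · rw [pderiv_X_self]; exact Subalgebra.one_mem _
    · rw [pderiv_X_of_ne hji]; exact Subalgebra.zero_mem _
  | algebraMap r => rw [algebraMap_eq, pderiv_C]; exact Subalgebra.zero_mem _
  | add x y _ _ hx hy => rw [map_add]; exact Subalgebra.add_mem _ hx hy
  | mul x y hx' hy' hx hy =>
    rw [pderiv_mul]
    exact Subalgebra.add_mem _ (Subalgebra.mul_mem _ hx hy') (Subalgebra.mul_mem _ hx' hy)

variable {s : Set σ} {p : σ → R}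

theorem eval_eq_constantCoeff_of_mem_supported (hp : ∀ j ∈ s, p j = 0) {P : MvPolynomial σ R}
    (hP : P ∈ supported R s) : eval p P = constantCoeff P :=
  eval₂Hom_eq_constantCoeff_of_vars _ fun j hj => hp j (mem_supported.mp hP hj)

theorem eval_pderiv_eq_coeff_of_mem_supported (hp : ∀ j ∈ s, p j = 0) (i : σ)
    {P : MvPolynomial σ R} (hP : P ∈ supported R s) :
    eval p (pderiv i P) = coeff (Finsupp.single i 1) P := by
  rw [eval_eq_constantCoeff_of_mem_supported hp (pderiv_mem_supported i hP), constantCoeff_pderiv]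

theorem IsHomogeneous.constantCoeff_eq_zero {P : MvPolynomial σ R} {n : ℕ}
    (hP : P.IsHomogeneous n) (hn : n ≠ 0) : constantCoeff P = 0 :=
  hP.coeff_eq_zero (by simpa using hn.symm)

theorem IsHomogeneous.coeff_single_one_eq_zero {P : MvPolynomial σ R} {n : ℕ}
    (hP : P.IsHomogeneous n) (hn : n ≠ 1) (i : σ) : coeff (Finsupp.single i 1) P = 0 :=
  hP.coeff_eq_zero (by simpa using hn.symm)

noncomputable def binaryQuadForm (L₁₁ L₁₂ L₂₂ : MvPolynomial σ R) (u v : R) :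
    MvPolynomial σ R :=
  C (u ^ 2) * L₁₁ + C (2 * u * v) * L₁₂ + C (v ^ 2) * L₂₂

theorem isHomogeneous_binaryQuadForm {L₁₁ L₁₂ L₂₂ : MvPolynomial σ R} {n : ℕ}
    (h₁₁ : L₁₁.IsHomogeneous n) (h₁₂ : L₁₂.IsHomogeneous n) (h₂₂ : L₂₂.IsHomogeneous n)
    (u v : R) : (binaryQuadForm L₁₁ L₁₂ L₂₂ u v).IsHomogeneous n := by
  simpa only [binaryQuadForm, zero_add] using ((h₁₁.C_mul _).add (h₁₂.C_mul _)).add (h₂₂.C_mul _)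

theorem eval_pderiv_eq_coeff_binaryQuadForm (hp : ∀ j ∈ s, p j = 0) (a b i : σ)
    {L₁₁ L₁₂ L₂₂ Q₁ Q₂ F : MvPolynomial σ R}
    (hL₁₁ : L₁₁.IsHomogeneous 1) (hL₁₂ : L₁₂.IsHomogeneous 1) (hL₂₂ : L₂₂.IsHomogeneous 1)
    (hQ₁ : Q₁.IsHomogeneous 2) (hQ₂ : Q₂.IsHomogeneous 2) (hF : F.IsHomogeneous 3)
    (hL₁₁s : L₁₁ ∈ supported R s) (hL₁₂s : L₁₂ ∈ supported R s) (hL₂₂s : L₂₂ ∈ supported R s)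
    (hQ₁s : Q₁ ∈ supported R s) (hQ₂s : Q₂ ∈ supported R s) (hFs : F ∈ supported R s) :
    eval p (pderiv i (X a ^ 2 * L₁₁ + 2 * X a * X b * L₁₂ + X b ^ 2 * L₂₂
      + 2 * X a * Q₁ + 2 * X b * Q₂ + F))
      = coeff (Finsupp.single i 1) (binaryQuadForm L₁₁ L₁₂ L₂₂ (p a) (p b)) := by
  have ev : ∀ {P : MvPolynomial σ R} {n : ℕ}, P.IsHomogeneous n → n ≠ 0 →
      P ∈ supported R s → eval p P = 0 := fun hP hn hPs => by
    rw [eval_eq_constantCoeff_of_mem_supported hp hPs, hP.constantCoeff_eq_zero hn]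
  rw [binaryQuadForm, coeff_add, coeff_add, coeff_C_mul, coeff_C_mul, coeff_C_mul]
  simp only [map_add, pderiv_mul, map_mul, map_pow,
    ← map_ofNat C, eval_X, eval_C,
    ev hL₁₁ one_ne_zero hL₁₁s, ev hL₁₂ one_ne_zero hL₁₂s, ev hL₂₂ one_ne_zero hL₂₂s,
    ev hQ₁ two_ne_zero hQ₁s, ev hQ₂ two_ne_zero hQ₂s,
    eval_pderiv_eq_coeff_of_mem_supported hp i hL₁₁s,
    eval_pderiv_eq_coeff_of_mem_supported hp i hL₁₂s,
    eval_pderiv_eq_coeff_of_mem_supported hp i hL₂₂s,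
    eval_pderiv_eq_coeff_of_mem_supported hp i hQ₁s,
    eval_pderiv_eq_coeff_of_mem_supported hp i hQ₂s,
    eval_pderiv_eq_coeff_of_mem_supported hp i hFs,
    hQ₁.coeff_single_one_eq_zero (by norm_num), hQ₂.coeff_single_one_eq_zero (by norm_num),
    hF.coeff_single_one_eq_zero (by norm_num)]
  ring

end CommSemiring

section Field

variable {σ K : Type*} [Field K]

theorem IsHomogeneous.prime_of_degree_one {L : MvPolynomial σ K} (hL : L.IsHomogeneous 1)
    (hL0 : L ≠ 0) : Prime L := by
  refine UniqueFactorizationMonoid.irreducible_iff_prime.mp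
    (irreducible_of_totalDegree_eq_one (hL.totalDegree hL0) fun x hx => ?_)
  obtain ⟨m, hm⟩ := ne_zero_iff.mp hL0
  exact isUnit_iff_ne_zero.mpr fun hx0 => hm (zero_dvd_iff.mp (hx0 ▸ hx m))

theorem IsHomogeneous.exists_eq_C_mul_of_dvd {L P : MvPolynomial σ K} (hL : L.IsHomogeneous 1)
    (hL0 : L ≠ 0) (hP : P.IsHomogeneous 1) (hdvd : L ∣ P) : ∃ c : K, P = C c * L := by
  obtain ⟨g, rfl⟩ := hdvd
  rcases eq_or_ne g 0 with rfl | hg0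
  · exact ⟨0, by simp⟩
  have hdeg := hP.totalDegree (mul_ne_zero hL0 hg0)
  rw [totalDegree_mul_of_isDomain hL0 hg0, hL.totalDegree hL0, add_eq_left,
    totalDegree_eq_zero_iff_eq_C] at hdeg
  exact ⟨coeff 0 g, by rw [mul_comm, ← hdeg]⟩

variable {L₁₁ L₁₂ L₂₂ : MvPolynomial σ K}

theorem exists_sq_of_binaryQuadForm_eq_zero (hi : IsSquare (-1 : K))
    (h₁₁ : L₁₁.IsHomogeneous 1) (h₁₂ : L₁₂.IsHomogeneous 1) {u v : K}
    (huv : ¬(u = 0 ∧ v = 0)) (hG : binaryQuadForm L₁₁ L₁₂ L₂₂ u v = 0) :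
    ∃ M : MvPolynomial σ K, M.IsHomogeneous 1 ∧ L₁₁ * L₂₂ - L₁₂ ^ 2 = M ^ 2 := by
  obtain ⟨i, hi⟩ := hi
  have hI : (C i : MvPolynomial σ K) ^ 2 = -1 := by rw [← map_pow, sq, ← hi, map_neg, map_one]
  simp only [binaryQuadForm, map_mul, map_pow, map_ofNat] at hG
  by_cases hv : v = 0
  · have hu : u ≠ 0 := fun hu => huv ⟨hu, hv⟩
    subst hv
    have h₁₁0 : L₁₁ = 0 := by simpa [hu] using hG
    exact ⟨C i * L₁₂, h₁₂.C_mul i, by linear_combination (-L₁₂ ^ 2) * hI + L₂₂ * h₁₁0⟩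
  · have hiv : C (i / v) * C v = (C i : MvPolynomial σ K) := by
      rw [← map_mul, div_mul_cancel₀ i hv]
    have hCv : (C v : MvPolynomial σ K) ^ 2 ≠ 0 := pow_ne_zero 2 (by simpa using hv)
    set A := C u * L₁₁ + C v * L₁₂
    refine ⟨C (i / v) * A, (h₁₁.C_mul u |>.add (h₁₂.C_mul v)).C_mul _, ?_⟩
    refine mul_left_cancel₀ hCv ?_
    linear_combination L₁₁ * hG - A ^ 2 * (C (i / v) * C v + C i) * hiv - A ^ 2 * hI

theorem exists_binaryQuadForm_eq_zero_of_eq_sq (hi : IsSquare (-1 : K))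
    (h₁₁ : L₁₁.IsHomogeneous 1) (h₁₂ : L₁₂.IsHomogeneous 1) {M : MvPolynomial σ K}
    (hM : M.IsHomogeneous 1) (hQ : L₁₁ * L₂₂ - L₁₂ ^ 2 = M ^ 2) :
    ∃ u v : K, ¬(u = 0 ∧ v = 0) ∧ binaryQuadForm L₁₁ L₁₂ L₂₂ u v = 0 := by
  obtain ⟨i, hi⟩ := hi
  have hI : (C i : MvPolynomial σ K) ^ 2 = -1 := by rw [← map_pow, sq, ← hi, map_neg, map_one]
  by_cases h₁₁0 : L₁₁ = 0
  · exact ⟨1, 0, by simp, by simp [binaryQuadForm, h₁₁0]⟩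
  obtain ⟨N, hN, hNM, hdvd⟩ : ∃ N : MvPolynomial σ K,
      N.IsHomogeneous 1 ∧ N ^ 2 = M ^ 2 ∧ L₁₁ ∣ L₁₂ + C i * N := by
    have hfac : L₁₁ * L₂₂ = (L₁₂ + C i * M) * (L₁₂ + C i * -M) := by
      linear_combination hQ + M ^ 2 * hI
    rcases (h₁₁.prime_of_degree_one h₁₁0).dvd_or_dvd ⟨L₂₂, hfac.symm⟩ with h | h
    · exact ⟨M, hM, rfl, h⟩
    · exact ⟨-M, hM.neg, neg_sq M, h⟩
  obtain ⟨c, hc⟩ := h₁₁.exists_eq_C_mul_of_dvd h₁₁0 (h₁₂.add (hN.C_mul i)) hdvd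
  refine ⟨-c, 1, by simp, (mul_eq_zero.mp ?_).resolve_left h₁₁0⟩
  simp only [binaryQuadForm, map_mul, map_pow, map_neg, map_one, map_ofNat]
  linear_combination (L₁₂ - C i * N - C c * L₁₁) * hc + N ^ 2 * hI - hNM + hQ

theorem binaryQuadForm_ne_zero_iff_not_exists_sq (hi : IsSquare (-1 : K))
    (h₁₁ : L₁₁.IsHomogeneous 1) (h₁₂ : L₁₂.IsHomogeneous 1) :
    (∀ u v : K, ¬(u = 0 ∧ v = 0) → binaryQuadForm L₁₁ L₁₂ L₂₂ u v ≠ 0) ↔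
      ¬∃ M : MvPolynomial σ K, M.IsHomogeneous 1 ∧ L₁₁ * L₂₂ - L₁₂ ^ 2 = M ^ 2 := by
  constructor
  · rintro h ⟨M, hM, hQ⟩
    obtain ⟨u, v, huv, hG⟩ := exists_binaryQuadForm_eq_zero_of_eq_sq hi h₁₁ h₁₂ hM hQ
    exact h u v huv hG
  · intro h u v huv hG
    exact h (exists_sq_of_binaryQuadForm_eq_zero hi h₁₁ h₁₂ huv hG)

end Field

end MvPolynomial

/-- The cubic hypersurface X = {f = 0} ⊂ P⁴, where
f = u²L₁₁ + 2uvL₁₂ + v²L₂₂ + 2uQ₁ + 2vQ₂ + C (variables x,y,z,u,v = X 0,…,X 4 and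
L₁₁,L₁₂,L₂₂,Q₁,Q₂,C homogeneous of degrees 1,1,1,2,2,3 in x,y,z only), is
nonsingular at every point of the line l = {x = y = z = 0}, i.e. for each
(u₀,v₀) ≠ (0,0) some partial derivative of f is nonzero at (0,0,0,u₀,v₀), if and
only if Q_Θ = L₁₁L₂₂ − L₁₂² is neither the zero polynomial nor the square of a
homogeneous linear polynomial. -/
theorem stmt_15
    (L11 L12 L22 Q1 Q2 C : MvPolynomial (Fin 5) ℂ)
    (hL11 : L11.IsHomogeneous 1) (hL12 : L12.IsHomogeneous 1) (hL22 : L22.IsHomogeneous 1)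
    (hQ1 : Q1.IsHomogeneous 2) (hQ2 : Q2.IsHomogeneous 2) (hC : C.IsHomogeneous 3)
    (hL11s : L11 ∈ MvPolynomial.supported ℂ ({0, 1, 2} : Set (Fin 5)))
    (hL12s : L12 ∈ MvPolynomial.supported ℂ ({0, 1, 2} : Set (Fin 5)))
    (hL22s : L22 ∈ MvPolynomial.supported ℂ ({0, 1, 2} : Set (Fin 5)))
    (hQ1s : Q1 ∈ MvPolynomial.supported ℂ ({0, 1, 2} : Set (Fin 5)))
    (hQ2s : Q2 ∈ MvPolynomial.supported ℂ ({0, 1, 2} : Set (Fin 5)))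
    (hCs : C ∈ MvPolynomial.supported ℂ ({0, 1, 2} : Set (Fin 5)))
    (f : MvPolynomial (Fin 5) ℂ)
    (hf : f = X 3 ^ 2 * L11 + 2 * X 3 * X 4 * L12 + X 4 ^ 2 * L22
      + 2 * X 3 * Q1 + 2 * X 4 * Q2 + C) :
    (∀ u₀ v₀ : ℂ, ¬(u₀ = 0 ∧ v₀ = 0) →
      ∃ i : Fin 5,
        eval (fun j => if j = 3 then u₀ else if j = 4 then v₀ else 0) (pderiv i f) ≠ 0)
    ↔ (L11 * L22 - L12 ^ 2 ≠ 0 ∧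
        ¬∃ M : MvPolynomial (Fin 5) ℂ, M.IsHomogeneous 1 ∧ L11 * L22 - L12 ^ 2 = M ^ 2) := by
  have hsmooth : ∀ u v : ℂ, (∃ i : Fin 5,
      eval (fun j => if j = 3 then u else if j = 4 then v else 0) (pderiv i f) ≠ 0) ↔
        binaryQuadForm L11 L12 L22 u v ≠ 0 := by
    intro u v
    have hline : ∀ j ∈ ({0, 1, 2} : Set (Fin 5)),
        (if j = 3 then u else if j = 4 then v else 0) = 0 := by
      rintro j (rfl | rfl | rfl) <;> rfl
    simp_rw [hf, eval_pderiv_eq_coeff_binaryQuadForm hline 3 4 _ hL11 hL12 hL22 hQ1 hQ2 hC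
      hL11s hL12s hL22s hQ1s hQ2s hCs]
    exact (isHomogeneous_binaryQuadForm hL11 hL12 hL22 u v).exists_coeff_single_ne_zero_iff
  simp_rw [hsmooth]
  rw [binaryQuadForm_ne_zero_iff_not_exists_sq ⟨Complex.I, Complex.I_mul_I.symm⟩ hL11 hL12]
  refine ⟨fun hsq => ⟨fun h0 => hsq ⟨0, isHomogeneous_zero _ _ _, by rw [h0]; ring⟩, hsq⟩,
    And.right⟩
end

section
/- For every p ∈ ℂ⁴ \ {0}, the following are equivalent: (i) there exists v₀ ∈ ℂ such that all five partial derivatives of F = v·f₂ + f₃ vanish at the point (p, v₀) ∈ ℂ⁵ (i.e. the cubic threefold X has a singular point other than s on the line through s in the direction p); (ii) f₂(p) = 0, f₃(p) = 0, and the gradient vectors of f₂ and f₃ at p are linearly dependent over ℂ (i.e. the point [p] of the quadrocubic A = {f₂ = f₃ = 0} ⊂ P³ is a singular point of this complete intersection). -/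
open MvPolynomial

lemma aux_X_mul_pderiv_monomial {k : ℕ} (d : Fin k →₀ ℕ) (c : ℂ) (i : Fin k) :
    X i * pderiv i (monomial d c) = monomial d ((d i : ℂ) * c) := by
  rw [pderiv_monomial]
  by_cases h : d i = 0
  · simp [h]
  · have hd : Finsupp.single i 1 + (d - Finsupp.single i 1) = d := by
      ext j
      simp only [Finsupp.coe_add, Finsupp.coe_tsub, Pi.add_apply, Pi.sub_apply,
        Finsupp.single_apply]
      by_cases hj : i = j
      · subst hj; rw [if_pos rfl]; omega
      · simp [hj]
    calc X i * monomial (d - Finsupp.single i 1) (c * d i)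
        = X i ^ 1 * monomial (d - Finsupp.single i 1) (c * d i) := by rw [pow_one]
      _ = monomial (Finsupp.single i 1 + (d - Finsupp.single i 1)) (c * d i) := by
          rw [monomial_single_add]
      _ = monomial d ((d i : ℂ) * c) := by rw [hd, mul_comm]

/-- Euler's identity for homogeneous polynomials. -/
lemma aux_euler {k n : ℕ} {f : MvPolynomial (Fin k) ℂ} (hf : f.IsHomogeneous n)
    (p : Fin k → ℂ) :
    ∑ i, p i * eval p (pderiv i f) = n * eval p f := by
  have key : ∑ i, X i * pderiv i f = (n : ℂ) • f := by
    conv_lhs => rw [f.as_sum]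
    conv_rhs => rw [f.as_sum]
    simp only [map_sum, Finset.mul_sum, Finset.smul_sum]
    rw [Finset.sum_comm]
    refine Finset.sum_congr rfl fun d hd => ?_
    have hdeg : ∑ i, d i = n := by
      have h := hf (mem_support_iff.mp hd)
      rw [← h, Finsupp.weight_apply, Finsupp.sum_fintype]
      · simp
      · simp
    calc ∑ i, X i * pderiv i (monomial d (coeff d f))
        = ∑ i, monomial d ((d i : ℂ) * coeff d f) := by
          exact Finset.sum_congr rfl fun i _ => aux_X_mul_pderiv_monomial d _ i
      _ = monomial d ((∑ i, (d i : ℂ)) * coeff d f) := by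
          rw [← map_sum, ← Finset.sum_mul]
      _ = (n : ℂ) • monomial d (coeff d f) := by
          rw [← Nat.cast_sum, hdeg, smul_monomial, smul_eq_mul]
  have := congrArg (eval p) key
  simpa [smul_eq_mul, Finset.mul_sum, mul_comm] using this

/-- Let f₂, f₃ ∈ ℂ[x,y,z,u] be homogeneous of degrees 2 and 3 with
f₂ a nondegenerate quadratic form (the quadric {f₂ = 0} ⊂ P³ is nonsingular), and
set F = v·f₂ + f₃, defining the cubic threefold X ⊂ P⁴ with a node at
s = [0:0:0:0:1].  For every direction p ∈ ℂ⁴ \ {0}: X has a singular point other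
than s on the line through s in direction p (i.e. there is v₀ with all five
partials of F vanishing at (p, v₀)) if and only if f₂(p) = 0, f₃(p) = 0, and the
gradients of f₂ and f₃ at p are linearly dependent over ℂ (i.e. [p] is a singular
point of the quadrocubic A = {f₂ = f₃ = 0} ⊂ P³). -/
theorem stmt_19
    (f2 f3 : MvPolynomial (Fin 4) ℂ)
    (hf2 : f2.IsHomogeneous 2) (hf3 : f3.IsHomogeneous 3)
    (hnd : ∀ p : Fin 4 → ℂ, p ≠ 0 → ∃ i : Fin 4, eval p (pderiv i f2) ≠ 0)
    (F : MvPolynomial (Fin 5) ℂ)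
    (hF : F = X 4 * rename (fun i : Fin 4 => i.castSucc) f2
      + rename (fun i : Fin 4 => i.castSucc) f3) :
    ∀ p : Fin 4 → ℂ, p ≠ 0 →
      ((∃ v₀ : ℂ, ∀ i : Fin 5, eval (Fin.snoc p v₀) (pderiv i F) = 0) ↔
        (eval p f2 = 0 ∧ eval p f3 = 0 ∧
          ¬LinearIndependent ℂ
            ![(fun i => eval p (pderiv i f2) : Fin 4 → ℂ),
              (fun i => eval p (pderiv i f3) : Fin 4 → ℂ)])) := by
  intro p hp
  have hinj : Function.Injective (fun i : Fin 4 => i.castSucc) := Fin.castSucc_injective 4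
  have hlast : (4 : Fin 5) = Fin.last 4 := rfl
  have hcomp : ∀ v₀ : ℂ, (Fin.snoc p v₀ : Fin 5 → ℂ) ∘ (fun i : Fin 4 => i.castSucc) = p := by
    intro v₀; funext i; simp
  have hp4 : ∀ g : MvPolynomial (Fin 4) ℂ,
      pderiv (4 : Fin 5) (rename (fun i : Fin 4 => i.castSucc) g) = 0 := by
    intro g
    apply pderiv_eq_zero_of_notMem_vars
    intro hmem
    obtain ⟨i, -, hi⟩ := mem_vars_rename _ _ hmem
    exact absurd hi.symm (by rw [hlast]; exact (Fin.castSucc_lt_last i).ne')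
  have key4 : ∀ v₀ : ℂ, eval (Fin.snoc p v₀) (pderiv (4 : Fin 5) F) = eval p f2 := by
    intro v₀
    rw [hF, map_add, Derivation.leibniz, hp4 f3, hp4 f2, pderiv_X_self]
    simp [eval_rename, hcomp]
  have key : ∀ (v₀ : ℂ) (j : Fin 4),
      eval (Fin.snoc p v₀) (pderiv (j.castSucc) F)
        = v₀ * eval p (pderiv j f2) + eval p (pderiv j f3) := by
    intro v₀ j
    have hx : pderiv (j.castSucc) (X (4 : Fin 5) : MvPolynomial (Fin 5) ℂ) = 0 := by
      rw [pderiv_X_of_ne]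
      rw [hlast]; exact (Fin.castSucc_lt_last j).ne'
    rw [hF, map_add, Derivation.leibniz, hx, pderiv_rename hinj, pderiv_rename hinj]
    simp only [smul_eq_mul, mul_zero, add_zero, map_add, map_mul, eval_X, eval_rename, hcomp,
      hlast, Fin.snoc_last, smul_zero, zero_add]
    try ring
  obtain ⟨i0, hi0⟩ := hnd p hp
  have hne : (fun i => eval p (pderiv i f2)) ≠ (0 : Fin 4 → ℂ) :=
    fun h => hi0 (congrFun h i0)
  constructor
  · rintro ⟨v₀, hv⟩
    have h2 : eval p f2 = 0 := by have := hv 4; rwa [key4] at this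
    have hgrad : ∀ j, eval p (pderiv j f3) = (-v₀) * eval p (pderiv j f2) := by
      intro j
      have := hv (j.castSucc)
      rw [key v₀ j] at this
      linear_combination this
    have h3 : eval p f3 = 0 := by
      have e3 := aux_euler hf3 p
      have e2 := aux_euler hf2 p
      have h : ((3 : ℕ) : ℂ) * eval p f3 = (-v₀) * (((2 : ℕ) : ℂ) * eval p f2) := by
        rw [← e3, ← e2, Finset.mul_sum]
        exact Finset.sum_congr rfl fun i _ => by rw [hgrad i]; ring
      rw [h2] at h
      simpa using h
    refine ⟨h2, h3, ?_⟩
    rw [LinearIndependent.pair_iff' hne]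
    push_neg
    exact ⟨-v₀, funext fun j => by simp [hgrad j]⟩
  · rintro ⟨h2, h3, hdep⟩
    rw [LinearIndependent.pair_iff' hne] at hdep
    push_neg at hdep
    obtain ⟨a, ha⟩ := hdep
    refine ⟨-a, fun i => ?_⟩
    refine Fin.lastCases ?_ (fun j => ?_) i
    · rw [← hlast, key4]; exact h2
    · rw [key (-a) j]
      have := congrFun ha j
      simp only [Pi.smul_apply, smul_eq_mul] at this
      rw [← this]; ring
end
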